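/- arXiv:1212.6656 — 7 statements merged into one kernel-verified Lean document; each statement's English description precedes it below -/
import Mathlib

section
/- Let λ = (a_1,…,a_n) ∈ ℂ^n and let 1 ≤ i ≤ n−1. Then: (1) s_i * λ < λ if and only if a_i ≻ a_{i+1}; (2) s_i * λ = λ if and only if either a_i = a_{i+1} ≠ 0 or (a_i, a_{i+1}) = (−1/2, 1/2); (3) λ < s_i * λ if and only if a_{i+1} − a_i ∈ ℤ_{>0} and (a_i, a_{i+1}) ≠ (−1/2, 1/2). -/
open Finset

/-- The 1-based `i`-th coordinate of a weight `λ ∈ ℂ^n` (0 if out of range). -/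
def coord {n : ℕ} (lam : Fin n → ℂ) (i : ℕ) : ℂ :=
  if h : 1 ≤ i ∧ i ≤ n then lam ⟨i - 1, by omega⟩ else 0

/-- The star action of the generator `s_i` (1 ≤ i ≤ n-1) on weights:
swap coordinates `i` and `i+1` if their sum is nonzero, otherwise replace
`(λ_i, λ_{i+1})` by `(λ_{i+1} - 1, λ_i + 1)`. -/
noncomputable def sStar {n : ℕ} (i : ℕ) (lam : Fin n → ℂ) : Fin n → ℂ := fun j =>
  if (j : ℕ) + 1 = i then
    (if coord lam i + coord lam (i + 1) = 0 then coord lam (i + 1) - 1 else coord lam (i + 1))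
  else if (j : ℕ) = i then
    (if coord lam i + coord lam (i + 1) = 0 then coord lam i + 1 else coord lam i)
  else lam j

/-- The partial order on weights: `μ ≤ ν` iff each partial sum
`Σ_{j=1}^i (ν_j - μ_j)` (1 ≤ i ≤ n-1) is a nonnegative integer and the
total sum `Σ_{j=1}^n (ν_j - μ_j)` is zero. -/
def wle {n : ℕ} (mu nu : Fin n → ℂ) : Prop :=
  (∀ i : ℕ, 1 ≤ i → i ≤ n - 1 →
    ∃ m : ℕ, ∑ j ∈ Finset.Icc 1 i, (coord nu j - coord mu j) = (m : ℂ)) ∧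
  ∑ j ∈ Finset.Icc 1 n, (coord nu j - coord mu j) = 0

/-- Strict inequality of weights. -/
def wlt {n : ℕ} (mu nu : Fin n → ℂ) : Prop := wle mu nu ∧ mu ≠ nu

/-- `a ≻ b` iff `a - b ∈ ℤ_{>0}` or `a = b = 0`. -/
def csucc (a b : ℂ) : Prop := (∃ m : ℤ, 0 < m ∧ a - b = (m : ℂ)) ∨ (a = 0 ∧ b = 0)

/-- `starDesc j k λ = s_j s_{j+1} ⋯ s_k * λ` (apply `s_k` first, `s_j` last);
equals `λ` when `j > k`. -/
noncomputable def starDesc {n : ℕ} (j k : ℕ) (lam : Fin n → ℂ) : Fin n → ℂ :=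
  (List.range' j (k + 1 - j)).foldr (fun i mu => sStar i mu) lam

/-- `starAsc j k λ = s_k s_{k-1} ⋯ s_j * λ` (apply `s_j` first, `s_k` last);
equals `λ` when `j > k`. -/
noncomputable def starAsc {n : ℕ} (j k : ℕ) (lam : Fin n → ℂ) : Fin n → ℂ :=
  (List.range' j (k + 1 - j)).foldl (fun mu i => sStar i mu) lam

lemma coord_succ {n : ℕ} (f : Fin n → ℂ) (j : Fin n) : coord f ((j : ℕ) + 1) = f j := by
  have h : 1 ≤ (j : ℕ) + 1 ∧ (j : ℕ) + 1 ≤ n := ⟨by omega, j.isLt⟩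
  rw [coord, dif_pos h]
  congr 1

lemma key {n : ℕ} (lam : Fin n → ℂ) (i : ℕ) (hn : 2 ≤ n) (hi1 : 1 ≤ i) (hi2 : i ≤ n - 1)
    (k : ℕ) : coord (sStar i lam) k =
    if k = i then (if coord lam i + coord lam (i+1) = 0 then coord lam (i+1) - 1 else coord lam (i+1))
    else if k = i + 1 then (if coord lam i + coord lam (i+1) = 0 then coord lam i + 1 else coord lam i)
    else coord lam k := by
  by_cases hk : 1 ≤ k ∧ k ≤ n
  · rw [coord, dif_pos hk]
    show (if (k - 1) + 1 = i then _ else if (k - 1) = i then _ else lam ⟨k - 1, by omega⟩) = _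
    by_cases h1 : k = i
    · rw [if_pos (show k - 1 + 1 = i by omega), if_pos h1]
    · by_cases h2 : k = i + 1
      · rw [if_neg (by omega), if_pos (by omega), if_neg h1, if_pos h2]
      · rw [if_neg (by omega), if_neg (by omega), if_neg h1, if_neg h2, coord, dif_pos hk]
  · have h1 : k ≠ i := by omega
    have h2 : k ≠ i + 1 := by omega
    rw [if_neg h1, if_neg h2]
    simp only [coord, dif_neg hk]

lemma sum_sub {n : ℕ} (lam : Fin n → ℂ) (i : ℕ) (hn : 2 ≤ n) (hi1 : 1 ≤ i) (hi2 : i ≤ n - 1)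
    (t : ℕ) : ∑ j ∈ Finset.Icc 1 t, (coord lam j - coord (sStar i lam) j) =
    (if i ≤ t then (coord lam i -
        (if coord lam i + coord lam (i+1) = 0 then coord lam (i+1) - 1 else coord lam (i+1))) else 0)
    + (if i + 1 ≤ t then (coord lam (i+1) -
        (if coord lam i + coord lam (i+1) = 0 then coord lam i + 1 else coord lam i)) else 0) := by
  have hd : ∀ j : ℕ, coord lam j - coord (sStar i lam) j =
      (if j = i then (coord lam i -
        (if coord lam i + coord lam (i+1) = 0 then coord lam (i+1) - 1 else coord lam (i+1))) else 0)
    + (if j = i + 1 then (coord lam (i+1) -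
        (if coord lam i + coord lam (i+1) = 0 then coord lam i + 1 else coord lam i)) else 0) := by
    intro j
    rw [key lam i hn hi1 hi2 j]
    rcases eq_or_ne j i with h1 | h1
    · subst h1; simp [show j ≠ j + 1 by omega]
    · rcases eq_or_ne j (i+1) with h2 | h2
      · subst h2; simp [show i + 1 ≠ i by omega]
      · simp [h1, h2]
  rw [Finset.sum_congr rfl fun j _ => hd j, Finset.sum_add_distrib,
      Finset.sum_ite_eq', Finset.sum_ite_eq']
  simp [Finset.mem_Icc, hi1]


section main
variable {n : ℕ} (lam : Fin n → ℂ) (i : ℕ) (hn : 2 ≤ n) (hi1 : 1 ≤ i) (hi2 : i ≤ n - 1)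

lemma hdd :
    (coord lam i - (if coord lam i + coord lam (i+1) = 0 then coord lam (i+1) - 1 else coord lam (i+1)))
    + (coord lam (i+1) - (if coord lam i + coord lam (i+1) = 0 then coord lam i + 1 else coord lam i))
    = 0 := by
  split_ifs <;> ring

include hn hi1 hi2 in
lemma wle_down_iff : wle (sStar i lam) lam ↔
    ∃ m : ℕ, coord lam i -
      (if coord lam i + coord lam (i+1) = 0 then coord lam (i+1) - 1 else coord lam (i+1)) = (m : ℂ) := by
  constructor
  · intro h
    have h2 := h.1 i hi1 hi2
    rw [sum_sub lam i hn hi1 hi2 i, if_pos (show i ≤ i from le_rfl), if_neg (show ¬ (i + 1 ≤ i) by omega)] at h2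
    simpa using h2
  · rintro ⟨m, hm⟩
    constructor
    · intro t ht1 ht2
      rw [sum_sub lam i hn hi1 hi2 t]
      by_cases h1 : i + 1 ≤ t
      · rw [if_pos (show i ≤ t by omega), if_pos h1]
        exact ⟨0, by rw [hdd]; norm_num⟩
      · by_cases h2 : i ≤ t
        · rw [if_pos h2, if_neg h1]
          exact ⟨m, by rw [add_zero, hm]⟩
        · rw [if_neg h2, if_neg h1]
          exact ⟨0, by norm_num⟩
    · rw [sum_sub lam i hn hi1 hi2 n, if_pos (show i ≤ n by omega), if_pos (show i + 1 ≤ n by omega)]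
      exact hdd lam i

include hn hi1 hi2 in
lemma wle_up_iff : wle lam (sStar i lam) ↔
    ∃ m : ℕ, (if coord lam i + coord lam (i+1) = 0 then coord lam (i+1) - 1 else coord lam (i+1))
      - coord lam i = (m : ℂ) := by
  have hneg : ∀ t : ℕ, ∑ j ∈ Finset.Icc 1 t, (coord (sStar i lam) j - coord lam j)
      = -∑ j ∈ Finset.Icc 1 t, (coord lam j - coord (sStar i lam) j) := by
    intro t
    rw [← Finset.sum_neg_distrib]
    exact Finset.sum_congr rfl fun j _ => by ring
  constructor
  · intro h
    have h2 := h.1 i hi1 hi2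
    rw [hneg, sum_sub lam i hn hi1 hi2 i, if_pos (show i ≤ i from le_rfl), if_neg (show ¬ (i + 1 ≤ i) by omega)] at h2
    obtain ⟨m, hm⟩ := h2
    exact ⟨m, by linear_combination hm⟩
  · rintro ⟨m, hm⟩
    constructor
    · intro t ht1 ht2
      rw [hneg, sum_sub lam i hn hi1 hi2 t]
      by_cases h1 : i + 1 ≤ t
      · rw [if_pos (show i ≤ t by omega), if_pos h1, hdd]
        exact ⟨0, by norm_num⟩
      · by_cases h2 : i ≤ t
        · rw [if_pos h2, if_neg h1]
          exact ⟨m, by linear_combination hm⟩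
        · rw [if_neg h2, if_neg h1]
          exact ⟨0, by norm_num⟩
    · rw [hneg, sum_sub lam i hn hi1 hi2 n, if_pos (show i ≤ n by omega), if_pos (show i + 1 ≤ n by omega), hdd]
      norm_num

include hn hi1 hi2 in
lemma eq_iff' : sStar i lam = lam ↔
    ((if coord lam i + coord lam (i+1) = 0 then coord lam (i+1) - 1 else coord lam (i+1)) = coord lam i
    ∧ (if coord lam i + coord lam (i+1) = 0 then coord lam i + 1 else coord lam i) = coord lam (i+1)) := by
  constructor
  · intro h
    constructor
    · have := key lam i hn hi1 hi2 i
      rw [h, if_pos rfl] at this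
      exact this.symm
    · have := key lam i hn hi1 hi2 (i+1)
      rw [h, if_neg (show ¬ (i + 1 = i) by omega), if_pos rfl] at this
      exact this.symm
  · rintro ⟨hx, hy⟩
    funext j
    rw [← coord_succ (sStar i lam) j, ← coord_succ lam j, key lam i hn hi1 hi2]
    by_cases h1 : (j : ℕ) + 1 = i
    · rw [if_pos h1, h1, hx]
    · by_cases h2 : (j : ℕ) + 1 = i + 1
      · rw [if_neg h1, if_pos h2, h2, hy]
      · rw [if_neg h1, if_neg h2]

end main

section arith
variable (a b : ℂ)

lemma arith2 (h0 : a + b = 0) : (b - 1 = a ∧ a + 1 = b) ↔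
    ((a = b ∧ a ≠ 0) ∨ (a = -(1/2) ∧ b = 1/2)) := by
  constructor
  · rintro ⟨h1, h2⟩
    exact Or.inr ⟨by linear_combination (h0 - h1) / 2, by linear_combination (h1 + h0) / 2⟩
  · rintro (⟨h1, h2⟩ | ⟨h1, h2⟩)
    · exact absurd (by linear_combination h0 / 2 + h1 / 2) h2
    · exact ⟨by linear_combination h2 - h1, by linear_combination h1 - h2⟩

lemma arith2' (h0 : a + b ≠ 0) : (b = a ∧ a = b) ↔
    ((a = b ∧ a ≠ 0) ∨ (a = -(1/2) ∧ b = 1/2)) := by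
  constructor
  · rintro ⟨h1, -⟩
    exact Or.inl ⟨h1.symm, fun ha => h0 (by linear_combination h1 + 2 * ha)⟩
  · rintro (⟨h1, h2⟩ | ⟨h1, h2⟩)
    · exact ⟨h1.symm, h1⟩
    · exact absurd (by rw [h1, h2]; ring) h0

lemma arith1 (h0 : a + b = 0) :
    ((∃ m : ℕ, a - (b - 1) = (m : ℂ)) ∧ ¬(b - 1 = a ∧ a + 1 = b)) ↔ csucc a b := by
  constructor
  · rintro ⟨⟨m, hm⟩, hne⟩
    match m with
    | 0 =>
      push_cast at hm
      exact absurd ⟨by linear_combination -hm, by linear_combination hm⟩ hne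
    | 1 =>
      push_cast at hm
      exact Or.inr ⟨by linear_combination hm / 2 + h0 / 2, by linear_combination h0 / 2 - hm / 2⟩
    | (k + 2) =>
      push_cast at hm
      exact Or.inl ⟨(k : ℤ) + 1, by omega, by push_cast; linear_combination hm⟩
  · rintro (⟨m, hm0, hm⟩ | ⟨ha, hb⟩)
    · refine ⟨⟨(m + 1).toNat, ?_⟩, ?_⟩
      · have h1 : (((m + 1).toNat : ℤ) : ℂ) = (m : ℂ) + 1 := by
          rw [Int.toNat_of_nonneg (by omega)]; push_cast; ring
        rw [show (((m + 1).toNat : ℕ) : ℂ) = (((m + 1).toNat : ℤ) : ℂ) by push_cast; ring, h1]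
        linear_combination hm
      · rintro ⟨h1, h2⟩
        have hcon : (m : ℂ) = -1 := by linear_combination h2 - hm
        have : m = -1 := by exact_mod_cast hcon
        omega
    · refine ⟨⟨1, by rw [ha, hb]; norm_num⟩, ?_⟩
      rintro ⟨h1, -⟩
      rw [ha, hb] at h1
      norm_num at h1

lemma arith1' (h0 : a + b ≠ 0) :
    ((∃ m : ℕ, a - b = (m : ℂ)) ∧ ¬(b = a ∧ a = b)) ↔ csucc a b := by
  constructor
  · rintro ⟨⟨m, hm⟩, hne⟩
    left
    have hm0 : m ≠ 0 := by
      rintro rfl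
      push_cast at hm
      exact hne ⟨by linear_combination -hm, by linear_combination hm⟩
    exact ⟨m, by exact_mod_cast Nat.pos_of_ne_zero hm0, by exact_mod_cast hm⟩
  · rintro (⟨m, hm0, hm⟩ | ⟨ha, hb⟩)
    · refine ⟨⟨m.toNat, ?_⟩, ?_⟩
      · rw [show ((m.toNat : ℕ) : ℂ) = ((m : ℤ) : ℂ) by
          rw [show ((m.toNat : ℕ) : ℂ) = (((m.toNat : ℤ)) : ℂ) by push_cast; ring,
            Int.toNat_of_nonneg (by omega)]]
        exact hm
      · rintro ⟨h1, -⟩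
        have hcon : (m : ℂ) = 0 := by linear_combination -hm - h1
        have : m = 0 := by exact_mod_cast hcon
        omega
    · exact absurd (by rw [ha, hb]; ring) h0

lemma arith3 (h0 : a + b = 0) :
    ((∃ m : ℕ, (b - 1) - a = (m : ℂ)) ∧ ¬(b - 1 = a ∧ a + 1 = b)) ↔
    ((∃ m : ℤ, 0 < m ∧ b - a = (m : ℂ)) ∧ ¬(a = -(1/2) ∧ b = 1/2)) := by
  constructor
  · rintro ⟨⟨m, hm⟩, hne⟩
    refine ⟨⟨(m : ℤ) + 1, by omega, by push_cast; linear_combination hm⟩, ?_⟩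
    rintro ⟨ha, hb⟩
    exact hne ⟨by rw [ha, hb]; norm_num, by rw [ha, hb]; norm_num⟩
  · rintro ⟨⟨m, hm0, hm⟩, hne⟩
    refine ⟨⟨(m - 1).toNat, ?_⟩, ?_⟩
    · rw [show (((m - 1).toNat : ℕ) : ℂ) = (m : ℂ) - 1 by
        rw [show (((m - 1).toNat : ℕ) : ℂ) = (((m - 1).toNat : ℤ) : ℂ) by push_cast; ring,
          Int.toNat_of_nonneg (by omega)]; push_cast; ring]
      linear_combination hm
    · rintro ⟨h1, h2⟩
      exact hne ⟨by linear_combination h2 / 2 + h0 / 2, by linear_combination h0 / 2 - h2 / 2⟩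

lemma arith3' (h0 : a + b ≠ 0) :
    ((∃ m : ℕ, b - a = (m : ℂ)) ∧ ¬(b = a ∧ a = b)) ↔
    ((∃ m : ℤ, 0 < m ∧ b - a = (m : ℂ)) ∧ ¬(a = -(1/2) ∧ b = 1/2)) := by
  constructor
  · rintro ⟨⟨m, hm⟩, hne⟩
    have hm0 : m ≠ 0 := by
      rintro rfl
      push_cast at hm
      exact hne ⟨by linear_combination hm, by linear_combination -hm⟩
    refine ⟨⟨m, by exact_mod_cast Nat.pos_of_ne_zero hm0, by exact_mod_cast hm⟩, ?_⟩
    rintro ⟨ha, hb⟩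
    exact h0 (by rw [ha, hb]; ring)
  · rintro ⟨⟨m, hm0, hm⟩, -⟩
    refine ⟨⟨m.toNat, ?_⟩, ?_⟩
    · rw [show ((m.toNat : ℕ) : ℂ) = ((m : ℤ) : ℂ) by
        rw [show ((m.toNat : ℕ) : ℂ) = (((m.toNat : ℤ)) : ℂ) by push_cast; ring,
          Int.toNat_of_nonneg (by omega)]]
      exact hm
    · rintro ⟨h1, -⟩
      have hcon : (m : ℂ) = 0 := by linear_combination h1 - hm
      have : m = 0 := by exact_mod_cast hcon
      omega

end arith
theorem stmt0 (n : ℕ) (hn : 2 ≤ n) (lam : Fin n → ℂ) (i : ℕ)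
    (hi1 : 1 ≤ i) (hi2 : i ≤ n - 1) :
    (wlt (sStar i lam) lam ↔ csucc (coord lam i) (coord lam (i + 1))) ∧
    (sStar i lam = lam ↔
      (coord lam i = coord lam (i + 1) ∧ coord lam i ≠ 0) ∨
      (coord lam i = -(1 / 2) ∧ coord lam (i + 1) = 1 / 2)) ∧
    (wlt lam (sStar i lam) ↔
      (∃ m : ℤ, 0 < m ∧ coord lam (i + 1) - coord lam i = (m : ℂ)) ∧
      ¬(coord lam i = -(1 / 2) ∧ coord lam (i + 1) = 1 / 2)) := by
  have hwd := wle_down_iff lam i hn hi1 hi2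
  have hwu := wle_up_iff lam i hn hi1 hi2
  have heq := eq_iff' lam i hn hi1 hi2
  by_cases h0 : coord lam i + coord lam (i + 1) = 0
  · rw [if_pos h0] at hwd hwu
    simp only [if_pos h0] at heq
    refine ⟨?_, ?_, ?_⟩
    · simp only [wlt, ne_eq]
      rw [hwd, heq]
      exact arith1 _ _ h0
    · rw [heq]
      exact arith2 _ _ h0
    · simp only [wlt, ne_eq]
      rw [hwu, (eq_comm : lam = sStar i lam ↔ _), heq]
      exact arith3 _ _ h0
  · rw [if_neg h0] at hwd hwu
    simp only [if_neg h0] at heq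
    refine ⟨?_, ?_, ?_⟩
    · simp only [wlt, ne_eq]
      rw [hwd, heq]
      exact arith1' _ _ h0
    · rw [heq]
      exact arith2' _ _ h0
    · simp only [wlt, ne_eq]
      rw [hwu, (eq_comm : lam = sStar i lam ↔ _), heq]
      exact arith3' _ _ h0
end

section
/- For each λ ∈ ℂ^n there exists a natural number N such that every strictly increasing chain λ = λ_0 < λ_1 < ⋯ < λ_m, in which for each 1 ≤ k ≤ m one has λ_k = s_{i_k} * λ_{k−1} for some 1 ≤ i_k ≤ n−1, satisfies m ≤ N. (The lengths of all increasing chains obtained from λ by star reflections are uniformly bounded.) -/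
open Finset

section StarAux

variable {n : ℕ}

lemma coord_apply (ν : Fin n → ℂ) (j : ℕ) (h1 : 1 ≤ j) (h2 : j ≤ n) :
    coord ν j = ν ⟨j - 1, by omega⟩ := by
  simp [coord, h1, h2]

lemma sum_two_change (ν ν' : Fin n → ℂ) (p q : Fin n) (hpq : p ≠ q)
    (h : ∀ j, j ≠ p → j ≠ q → ν' j = ν j) (f : ℂ → ℂ) :
    ∑ j, f (ν' j) = ∑ j, f (ν j) + (f (ν' p) - f (ν p)) + (f (ν' q) - f (ν q)) := by
  have key : ∀ μ : Fin n → ℂ,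
      ∑ j, f (μ j) = f (μ p) + (f (μ q) + ∑ j ∈ (univ.erase p).erase q, f (μ j)) := by
    intro μ
    rw [← Finset.sum_erase_add univ _ (mem_univ p),
        ← Finset.sum_erase_add _ _ (Finset.mem_erase.mpr ⟨Ne.symm hpq, mem_univ q⟩)]
    ring
  rw [key ν', key ν]

  have hcg : ∀ j ∈ (univ.erase p).erase q, f (ν' j) = f (ν j) := by
    intro j hj
    rw [h j (Finset.mem_erase.mp (Finset.mem_erase.mp hj).2).1 (Finset.mem_erase.mp hj).1]
  rw [Finset.sum_congr rfl hcg]; ring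

lemma sStar_eq_update (i : ℕ) (hi1 : 1 ≤ i) (hin : i < n) (ν : Fin n → ℂ) :
    sStar i ν = Function.update (Function.update ν ⟨i - 1, by omega⟩
        (if coord ν i + coord ν (i + 1) = 0 then coord ν (i + 1) - 1 else coord ν (i + 1)))
        ⟨i, hin⟩
        (if coord ν i + coord ν (i + 1) = 0 then coord ν i + 1 else coord ν i) := by
  funext j
  have hpq : (⟨i - 1, by omega⟩ : Fin n) ≠ ⟨i, hin⟩ := by
    simp only [ne_eq, Fin.mk.injEq]; omega
  by_cases h1 : (j : ℕ) + 1 = i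
  · have hj : j = (⟨i - 1, by omega⟩ : Fin n) := by
      simp only [Fin.ext_iff]; omega
    rw [hj] at h1 ⊢
    rw [Function.update_of_ne hpq, Function.update_self]
    simp only [sStar, h1, if_pos rfl]
    simp [h1]
  · by_cases h2 : (j : ℕ) = i
    · have hj : j = (⟨i, hin⟩ : Fin n) := by simp only [Fin.ext_iff]; omega
      rw [hj]
      rw [Function.update_self]
      simp [sStar, h1, h2]
    · have hjp : j ≠ (⟨i - 1, by omega⟩ : Fin n) := by
        simp only [ne_eq, Fin.ext_iff]; omega
      have hjq : j ≠ (⟨i, hin⟩ : Fin n) := by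
        simp only [ne_eq, Fin.ext_iff]; omega
      rw [Function.update_of_ne hjq, Function.update_of_ne hjp]
      simp [sStar, h1, h2]

lemma step_facts (i : ℕ) (hn : 2 ≤ n) (hi1 : 1 ≤ i) (hi2 : i ≤ n - 1)
    (ν : Fin n → ℂ)
    (hle : ∀ l : ℕ, 1 ≤ l → l ≤ n - 1 →
      ∃ m : ℕ, ∑ j ∈ Finset.Icc 1 l, (coord (sStar i ν) j - coord ν j) = (m : ℂ))
    (hne : ν ≠ sStar i ν) :
    (∃ c : ℕ, 1 ≤ c ∧
      ∑ l ∈ Icc 1 (n - 1), ∑ j ∈ Icc 1 l, (coord (sStar i ν) j - coord ν j) = (c : ℂ)) ∧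
    (∑ j, (sStar i ν j) ^ 2).re ≤ (∑ j, (ν j) ^ 2).re ∧
    (∀ j, ∃ p, (sStar i ν j).im = (ν p).im) := by
  classical
  have hin : i < n := by omega
  set p : Fin n := ⟨i - 1, by omega⟩ with hp_def
  set q : Fin n := ⟨i, hin⟩ with hq_def
  have hpq : p ≠ q := by simp only [hp_def, hq_def, ne_eq, Fin.mk.injEq]; omega
  set x := coord ν i with hx_def
  set y := coord ν (i + 1) with hy_def
  set A := if x + y = 0 then y - 1 else y with hA_def
  set B := if x + y = 0 then x + 1 else x with hB_def
  have hxp : x = ν p := by rw [hx_def, coord_apply ν i hi1 hin.le]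
  have hyq : y = ν q := by
    rw [hy_def, coord_apply ν (i + 1) (by omega) (by omega)]
    exact congrArg ν (Fin.ext (show i + 1 - 1 = i by omega))
  have hup : sStar i ν = Function.update (Function.update ν p A) q B := by
    rw [sStar_eq_update i hi1 hin ν]
  have hvp : sStar i ν p = A := by
    rw [hup, Function.update_of_ne hpq, Function.update_self]
  have hvq : sStar i ν q = B := by
    rw [hup, Function.update_self]
  have hothers : ∀ j, j ≠ p → j ≠ q → sStar i ν j = ν j := by
    intro j hjp hjq
    rw [hup, Function.update_of_ne hjq, Function.update_of_ne hjp]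
  have hci : coord (sStar i ν) i = A := by
    rw [coord_apply _ i hi1 hin.le]; exact hvp
  have hci1 : coord (sStar i ν) (i + 1) = B := by
    rw [coord_apply _ (i + 1) (by omega) (by omega)]
    rw [show (⟨i + 1 - 1, by omega⟩ : Fin n) = q from Fin.ext (show i + 1 - 1 = i by omega)]
    exact hvq
  have hother : ∀ l, 1 ≤ l → l ≤ n → l ≠ i → l ≠ i + 1 →
      coord (sStar i ν) l = coord ν l := by
    intro l h1 h2 h3 h4
    rw [coord_apply _ l h1 h2, coord_apply ν l h1 h2]
    apply hothers
    · simp only [hp_def, ne_eq, Fin.mk.injEq]; omega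
    · simp only [hq_def, ne_eq, Fin.mk.injEq]; omega
  have hsum : A + B = x + y := by
    rw [hA_def, hB_def]; split_ifs <;> ring
  have hSi : ∑ j ∈ Icc 1 i, (coord (sStar i ν) j - coord ν j) = A - x := by
    rw [Finset.sum_eq_single_of_mem i (by simp only [Finset.mem_Icc]; omega)]
    · rw [hci, hx_def]
    · intro l hl hli
      simp only [Finset.mem_Icc] at hl
      rw [hother l hl.1 (by omega) hli (by omega), sub_self]
  obtain ⟨mi, hmi⟩ := hle i hi1 hi2
  rw [hSi] at hmi
  have hAx : A - x ≠ 0 := by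
    intro h0
    have hA : A = x := by linear_combination h0
    have hB : B = y := by linear_combination hsum - hA
    apply hne
    rw [hup, hA, hB, hxp, hyq]
    simp
  have hmi1 : 1 ≤ mi := by
    rcases Nat.eq_zero_or_pos mi with h | h
    · exfalso; apply hAx; rw [hmi, h]; simp
    · exact h
  refine ⟨?_, ?_, ?_⟩
  · -- the chain sum is a positive natural number
    set f : ℕ → ℕ := fun l =>
      if h : ∃ m : ℕ, ∑ j ∈ Finset.Icc 1 l, (coord (sStar i ν) j - coord ν j) = (m : ℂ)
      then h.choose else 0 with hf_def
    have hf : ∀ l ∈ Icc 1 (n - 1),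
        ∑ j ∈ Icc 1 l, (coord (sStar i ν) j - coord ν j) = (f l : ℂ) := by
      intro l hl
      simp only [Finset.mem_Icc] at hl
      have hex := hle l hl.1 hl.2
      rw [hf_def]
      simp only [dif_pos hex]
      exact hex.choose_spec
    refine ⟨∑ l ∈ Icc 1 (n - 1), f l, ?_, ?_⟩
    · have hfi : 1 ≤ f i := by
        rcases Nat.eq_zero_or_pos (f i) with h | h
        · exfalso
          have := hf i (by simp only [Finset.mem_Icc]; omega)
          rw [hSi, h] at this
          exact hAx (by rw [this]; simp)
        · exact h
      calc 1 ≤ f i := hfi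
        _ ≤ ∑ l ∈ Icc 1 (n - 1), f l :=
          Finset.single_le_sum (fun _ _ => Nat.zero_le _)
            (by simp only [Finset.mem_Icc]; omega)
    · rw [Finset.sum_congr rfl hf]
      exact (Nat.cast_sum _ _).symm
  · -- the sum of squares has non-increasing real part
    have hQ := sum_two_change ν (sStar i ν) p q hpq hothers (fun z => z ^ 2)
    simp only [hvp, hvq, ← hxp, ← hyq] at hQ
    have hE : ((A ^ 2 - x ^ 2) + (B ^ 2 - y ^ 2)).re ≤ 0 := by
      by_cases hc : x + y = 0
      · have hA : A = y - 1 := by rw [hA_def, if_pos hc]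
        have hB : B = x + 1 := by rw [hB_def, if_pos hc]
        rw [hA] at hmi
        have hkey : (A ^ 2 - x ^ 2) + (B ^ 2 - y ^ 2) = ((-2 * (mi : ℝ) : ℝ) : ℂ) := by
          rw [hA, hB]
          push_cast
          linear_combination (-2 : ℂ) * hmi
        rw [hkey, Complex.ofReal_re]
        nlinarith [Nat.cast_nonneg (α := ℝ) mi]
      · have hA : A = y := by rw [hA_def, if_neg hc]
        have hB : B = x := by rw [hB_def, if_neg hc]
        have hkey : (A ^ 2 - x ^ 2) + (B ^ 2 - y ^ 2) = 0 := by rw [hA, hB]; ring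
        rw [hkey]; simp
    have hQ2 : ∑ j, (sStar i ν j) ^ 2
        = ∑ j, (ν j) ^ 2 + ((A ^ 2 - x ^ 2) + (B ^ 2 - y ^ 2)) := by
      rw [hQ]; ring
    rw [hQ2, Complex.add_re]
    linarith
  · -- imaginary parts are permuted-ish
    intro j
    by_cases hj : j = q
    · refine ⟨p, ?_⟩
      rw [hj, hvq, hB_def, ← hxp]
      split_ifs <;> simp
    · by_cases hj2 : j = p
      · refine ⟨q, ?_⟩
        rw [hj2, hvp, hA_def, ← hyq]
        split_ifs <;> simp
      · exact ⟨j, by rw [hothers j hj2 hj]⟩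

lemma re_sq_sum (μ : Fin n → ℂ) :
    ∑ j, ((μ j).re) ^ 2 = (∑ j, (μ j) ^ 2).re + ∑ j, ((μ j).im) ^ 2 := by
  rw [Complex.re_sum, ← Finset.sum_add_distrib]
  refine Finset.sum_congr rfl fun j _ => ?_
  have : ((μ j) ^ 2).re = (μ j).re ^ 2 - (μ j).im ^ 2 := by
    rw [pow_two, Complex.mul_re]; ring
  rw [this]; ring

lemma abs_le_one_add_sq (t : ℝ) : |t| ≤ 1 + t ^ 2 := by
  nlinarith [sq_nonneg (|t| - 1), sq_abs t, abs_nonneg t]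

theorem stmt3' (n : ℕ) (hn : 2 ≤ n) (lam : Fin n → ℂ) :
    ∃ N : ℕ, ∀ (m : ℕ) (nu : ℕ → Fin n → ℂ),
      nu 0 = lam →
      (∀ k, 1 ≤ k → k ≤ m →
        ∃ i, 1 ≤ i ∧ i ≤ n - 1 ∧ nu k = sStar i (nu (k - 1)) ∧
          (∀ l : ℕ, 1 ≤ l → l ≤ n - 1 →
            ∃ m2 : ℕ, ∑ j ∈ Finset.Icc 1 l, (coord (nu k) j - coord (nu (k-1)) j) = (m2 : ℂ)) ∧
          nu (k - 1) ≠ nu k) →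
      m ≤ N := by
  classical
  set IM : ℝ := ∑ p2 : Fin n, ((lam p2).im) ^ 2 with hIM_def
  set QL : ℝ := (∑ p2 : Fin n, (lam p2) ^ 2).re with hQL_def
  set CL : ℝ := ∑ p2 : Fin n, |(lam p2).re| with hCL_def
  set C2 : ℝ := (1 + (QL + n * IM)) + CL with hC2_def
  have hIM0 : 0 ≤ IM := Finset.sum_nonneg fun _ _ => sq_nonneg _
  have hCL0 : 0 ≤ CL := Finset.sum_nonneg fun _ _ => abs_nonneg _
  have hQLIM : 0 ≤ QL + IM := by
    have := re_sq_sum lam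
    have h2 : 0 ≤ ∑ j, ((lam j).re) ^ 2 := Finset.sum_nonneg fun _ _ => sq_nonneg _
    rw [this] at h2
    linarith
  have hn1 : (1 : ℝ) ≤ (n : ℝ) := by exact_mod_cast Nat.one_le_of_lt hn
  have hC20 : 0 ≤ C2 := by nlinarith
  refine ⟨Nat.ceil ((n : ℝ) * n * C2), ?_⟩
  intro m nu h0 hstep
  have key : ∀ k, k ≤ m →
      (∃ c : ℕ, k ≤ c ∧
        ∑ l ∈ Icc 1 (n - 1), ∑ j ∈ Icc 1 l, (coord (nu k) j - coord lam j) = (c : ℂ)) ∧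
      (∑ j, (nu k j) ^ 2).re ≤ QL ∧
      (∀ j, ∃ p2, (nu k j).im = (lam p2).im) := by
    intro k
    induction k with
    | zero =>
      intro _
      refine ⟨⟨0, le_refl _, ?_⟩, ?_, ?_⟩
      · rw [h0]; simp
      · rw [h0]
      · rw [h0]; exact fun j => ⟨j, rfl⟩
    | succ k ih =>
      intro hk1
      obtain ⟨⟨c, hc1, hc2⟩, hQ, hIm⟩ := ih (by omega)
      obtain ⟨i, hi1, hi2, hnu, hle, hne⟩ := hstep (k + 1) (by omega) hk1
      simp only [Nat.add_sub_cancel] at hnu hle hne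
      rw [hnu] at hle hne
      rw [hnu]
      obtain ⟨⟨cs, hcs1, hcs2⟩, hQs, hIms⟩ :=
        step_facts i hn hi1 hi2 (nu k) hle hne
      refine ⟨⟨c + cs, by omega, ?_⟩, ?_, ?_⟩
      · have htel : ∑ l ∈ Icc 1 (n - 1), ∑ j ∈ Icc 1 l,
            (coord (sStar i (nu k)) j - coord lam j)
            = (∑ l ∈ Icc 1 (n - 1), ∑ j ∈ Icc 1 l, (coord (nu k) j - coord lam j))
              + ∑ l ∈ Icc 1 (n - 1), ∑ j ∈ Icc 1 l,
                (coord (sStar i (nu k)) j - coord (nu k) j) := by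
          rw [← Finset.sum_add_distrib]
          refine Finset.sum_congr rfl fun l _ => ?_
          rw [← Finset.sum_add_distrib]
          refine Finset.sum_congr rfl fun j _ => ?_
          ring
        rw [htel, hc2, hcs2]
        push_cast
        ring
      · exact le_trans hQs hQ
      · intro j
        obtain ⟨p2, hp2⟩ := hIms j
        obtain ⟨p3, hp3⟩ := hIm p2
        exact ⟨p3, by rw [hp2, hp3]⟩
  obtain ⟨⟨c, hc1, hc2⟩, hQ, hIm⟩ := key m le_rfl
  -- now bound c
  have hsumim : ∑ j : Fin n, ((nu m j).im) ^ 2 ≤ (n : ℝ) * IM := by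
    calc ∑ j : Fin n, ((nu m j).im) ^ 2
        ≤ ∑ _j : Fin n, IM := by
          refine Finset.sum_le_sum fun j _ => ?_
          obtain ⟨p2, hp⟩ := hIm j
          rw [hp]
          exact Finset.single_le_sum (f := fun p => ((lam p).im) ^ 2)
            (fun _ _ => sq_nonneg _) (mem_univ p2)
      _ = (n : ℝ) * IM := by
          rw [Finset.sum_const, Finset.card_univ, Fintype.card_fin, nsmul_eq_mul]
  have hre_bound : ∀ j : Fin n, ((nu m j).re) ^ 2 ≤ QL + n * IM := by
    intro j
    have h1 : ((nu m j).re) ^ 2 ≤ ∑ j', ((nu m j').re) ^ 2 :=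
      Finset.single_le_sum (f := fun j' => ((nu m j').re) ^ 2)
        (fun _ _ => sq_nonneg _) (mem_univ j)
    rw [re_sq_sum (nu m)] at h1
    linarith
  have hterm : ∀ l ∈ Icc 1 (n - 1), ∀ j ∈ Icc 1 l,
      ((coord (nu m) j).re - (coord lam j).re) ≤ C2 := by
    intro l hl j hj
    simp only [Finset.mem_Icc] at hl hj
    have hj1 : 1 ≤ j := hj.1
    have hjn : j ≤ n := by omega
    rw [coord_apply (nu m) j hj1 hjn, coord_apply lam j hj1 hjn]
    have h1 : |(nu m ⟨j - 1, by omega⟩).re| ≤ 1 + (QL + n * IM) := by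
      have := abs_le_one_add_sq ((nu m ⟨j - 1, by omega⟩).re)
      have h2 := hre_bound ⟨j - 1, by omega⟩
      linarith
    have h2 : |(lam ⟨j - 1, by omega⟩).re| ≤ CL :=
      Finset.single_le_sum (f := fun p => |(lam p).re|)
        (fun _ _ => abs_nonneg _) (mem_univ _)
    have := abs_nonneg ((nu m ⟨j - 1, by omega⟩).re)
    have := le_abs_self ((nu m ⟨j - 1, by omega⟩).re)
    have := neg_abs_le ((lam ⟨j - 1, by omega⟩).re)
    rw [hC2_def]
    linarith
  have hTre : ((c : ℕ) : ℝ)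
      = ∑ l ∈ Icc 1 (n - 1), ∑ j ∈ Icc 1 l, ((coord (nu m) j).re - (coord lam j).re) := by
    have := congrArg Complex.re hc2
    rw [Complex.natCast_re] at this
    rw [← this, Complex.re_sum]
    refine Finset.sum_congr rfl fun l _ => ?_
    rw [Complex.re_sum]
    refine Finset.sum_congr rfl fun j _ => ?_
    rw [Complex.sub_re]
  have hbound : ((c : ℕ) : ℝ) ≤ (n : ℝ) * n * C2 := by
    rw [hTre]
    calc ∑ l ∈ Icc 1 (n - 1), ∑ j ∈ Icc 1 l, ((coord (nu m) j).re - (coord lam j).re)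
        ≤ ∑ l ∈ Icc 1 (n - 1), (n : ℝ) * C2 := by
          refine Finset.sum_le_sum fun l hl => ?_
          calc ∑ j ∈ Icc 1 l, ((coord (nu m) j).re - (coord lam j).re)
              ≤ ∑ _j ∈ Icc 1 l, C2 := Finset.sum_le_sum (hterm l hl)
            _ = (Icc 1 l).card • C2 := by rw [Finset.sum_const]
            _ = (l : ℝ) * C2 := by rw [Nat.card_Icc, nsmul_eq_mul]; norm_num
            _ ≤ (n : ℝ) * C2 := by
                have hl2 : (l : ℝ) ≤ (n : ℝ) := by
                  simp only [Finset.mem_Icc] at hl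
                  exact_mod_cast (by omega : l ≤ n)
                nlinarith
      _ = ((n - 1 : ℕ) : ℝ) * ((n : ℝ) * C2) := by
          rw [Finset.sum_const, Nat.card_Icc, nsmul_eq_mul]; norm_num
      _ ≤ (n : ℝ) * n * C2 := by
          have h1 : ((n - 1 : ℕ) : ℝ) ≤ (n : ℝ) := by exact_mod_cast (by omega : n - 1 ≤ n)
          have h2 : 0 ≤ (n : ℝ) * C2 := mul_nonneg (by linarith) hC20
          nlinarith
  have hfin : c ≤ Nat.ceil ((n : ℝ) * n * C2) := by
    have := le_trans hbound (Nat.le_ceil _)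
    exact_mod_cast this
  omega

end StarAux

theorem stmt3 (n : ℕ) (hn : 2 ≤ n) (lam : Fin n → ℂ) :
    ∃ N : ℕ, ∀ (m : ℕ) (nu : ℕ → Fin n → ℂ),
      nu 0 = lam →
      (∀ k, 1 ≤ k → k ≤ m →
        ∃ i, 1 ≤ i ∧ i ≤ n - 1 ∧ nu k = sStar i (nu (k - 1)) ∧ wlt (nu (k - 1)) (nu k)) →
      m ≤ N := by
  obtain ⟨N, hN⟩ := stmt3' n hn lam
  refine ⟨N, fun m nu h0 hstep => hN m nu h0 fun k hk1 hk2 => ?_⟩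
  obtain ⟨i, hi1, hi2, hnu, hwlt⟩ := hstep k hk1 hk2
  exact ⟨i, hi1, hi2, hnu, hwlt.1.1, hwlt.2⟩
end

section
/- For each μ ∈ ℂ^n there exists a finite sequence μ = μ_0 < μ_1 < ⋯ < μ_s (possibly with s = 0) such that for each 0 ≤ j < s one has μ_{j+1} = s_{k_j} * μ_j for some 1 ≤ k_j ≤ n−1, and μ_s is W̃-maximal; that is, every weight is the starting point of an increasing W̃-string ending at a W̃-maximal weight. -/
open Finset

/-! A step `μ ↦ s_k * μ` with `μ < s_k * μ` raises the height `Σ_{i<n} Re(λ_1 + ⋯ + λ_i)` by at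
least one, since `μ < ν` makes every partial-sum difference a natural number, not all zero. In a
raising step the two coordinates change either by a swap or, in the degenerate case, from
`(-(m+1)/2, (m+1)/2)` to `((m-1)/2, -(m-1)/2)` with `m ∈ ℕ`; so no coordinate ever exceeds the
largest norm of a coordinate of the starting weight. The height is bounded on such weights, hence
every chain of raising steps is finite, and a longest one ends at a `W̃`-maximal weight. -/

theorem exists_chain_to_maximal_of_potential {α : Type*} {r : α → α → Prop} {P : α → Prop}
    (φ : α → ℝ) (B : ℝ) (hP : ∀ a b, r a b → P a → P b) (hφ : ∀ a b, r a b → φ a + 1 ≤ φ b)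
    (hB : ∀ a, P a → φ a ≤ B) {a : α} (ha : P a) :
    ∃ (s : ℕ) (f : ℕ → α), f 0 = a ∧ (∀ j < s, r (f j) (f (j + 1))) ∧ ∀ b, ¬ r (f s) b := by
  suffices key : ∀ d : ℕ, ∀ a, P a → B ≤ φ a + d →
      ∃ (s : ℕ) (f : ℕ → α), f 0 = a ∧ (∀ j < s, r (f j) (f (j + 1))) ∧ ∀ b, ¬ r (f s) b from
    key _ a ha (by linarith [Nat.le_ceil (B - φ a)])
  intro d
  induction d with
  | zero =>
    intro a ha hd
    refine ⟨0, fun _ => a, rfl, by simp, fun b (hab : r a b) => ?_⟩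
    push_cast at hd
    linarith [hφ a b hab, hB b (hP a b hab ha)]
  | succ d ih =>
    intro a ha hd
    by_cases hmax : ∀ b, ¬ r a b
    · exact ⟨0, fun _ => a, rfl, by simp, hmax⟩
    push Not at hmax
    obtain ⟨b, hab⟩ := hmax
    obtain ⟨s, f, hf0, hchain, hend⟩ :=
      ih b (hP a b hab ha) (by push_cast at hd; linarith [hφ a b hab])
    refine ⟨s + 1, fun j => Nat.casesOn j a f, rfl, fun j hj => ?_, hend⟩
    cases j with
    | zero => simpa [hf0] using hab
    | succ j => exact hchain j (by omega)

theorem Complex.norm_add_one_le_norm {x : ℂ} (hx : x.re ≤ -1 / 2) : ‖x + 1‖ ≤ ‖x‖ := by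
  rw [← sq_le_sq₀ (norm_nonneg _) (norm_nonneg _), Complex.sq_norm, Complex.sq_norm,
    Complex.normSq_apply, Complex.normSq_apply]
  simp only [Complex.add_re, Complex.one_re, Complex.add_im, Complex.one_im, add_zero]
  nlinarith

section Weights

variable {n : ℕ}

lemma coord_eq (lam : Fin n → ℂ) {i : ℕ} (h1 : 1 ≤ i) (h2 : i ≤ n) :
    coord lam i = lam ⟨i - 1, by omega⟩ := by
  simp [coord, h1, h2]

lemma coord_fin_succ (lam : Fin n → ℂ) (j : Fin n) : coord lam ((j : ℕ) + 1) = lam j := by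
  rw [coord_eq lam (by omega) (by omega)]
  rfl

lemma norm_coord_le {lam : Fin n → ℂ} {C : ℝ} (hC : ∀ j, ‖lam j‖ ≤ C) {i : ℕ} (h1 : 1 ≤ i)
    (h2 : i ≤ n) : ‖coord lam i‖ ≤ C := by
  rw [coord_eq lam h1 h2]
  exact hC _

lemma coord_sStar_of_lt {k i : ℕ} (hik : i < k) (lam : Fin n → ℂ) :
    coord (sStar k lam) i = coord lam i := by
  unfold coord
  split_ifs with h
  · simp only [sStar]
    rw [if_neg (by omega), if_neg (by omega)]
  · rfl

lemma coord_sStar_self {k : ℕ} (hk1 : 1 ≤ k) (hkn : k ≤ n) (lam : Fin n → ℂ) :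
    coord (sStar k lam) k =
      if coord lam k + coord lam (k + 1) = 0 then coord lam (k + 1) - 1 else coord lam (k + 1) := by
  rw [coord_eq _ hk1 hkn]
  simp only [sStar]
  rw [if_pos (by omega)]

lemma re_coord_le_of_wle_sStar {k : ℕ} (hk1 : 1 ≤ k) (hk2 : k ≤ n - 1) {lam : Fin n → ℂ}
    (h0 : coord lam k + coord lam (k + 1) = 0) (hw : wle lam (sStar k lam)) :
    (coord lam k).re ≤ -1 / 2 := by
  obtain ⟨m, hm⟩ := hw.1 k hk1 hk2
  have hsum : ∑ j ∈ Icc 1 k, (coord (sStar k lam) j - coord lam j) =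
      coord (sStar k lam) k - coord lam k := by
    refine sum_eq_single_of_mem k (mem_Icc.mpr ⟨hk1, le_rfl⟩) fun j hj hjk => ?_
    rw [coord_sStar_of_lt (lt_of_le_of_ne (mem_Icc.mp hj).2 hjk), sub_self]
  rw [hsum, coord_sStar_self hk1 (by omega), if_pos h0] at hm
  have hre := congrArg Complex.re (show coord lam k = -((m : ℂ) + 1) / 2 by
    linear_combination (-1 / 2 : ℂ) * hm + (1 / 2 : ℂ) * h0)
  simp only [Complex.div_ofNat_re, Complex.neg_re, Complex.add_re, Complex.natCast_re,
    Complex.one_re] at hre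
  rw [hre]
  linarith [(Nat.cast_nonneg m : (0 : ℝ) ≤ m)]

lemma norm_sStar_le {k : ℕ} (hk1 : 1 ≤ k) (hk2 : k ≤ n - 1) {lam : Fin n → ℂ} {C : ℝ}
    (hC : ∀ j, ‖lam j‖ ≤ C) (hw : wle lam (sStar k lam)) (j : Fin n) :
    ‖sStar k lam j‖ ≤ C := by
  have hk : ‖coord lam k‖ ≤ C := norm_coord_le hC hk1 (by omega)
  have hk' : ‖coord lam (k + 1)‖ ≤ C := norm_coord_le hC (by omega) (by omega)
  simp only [sStar]
  split_ifs with _ h0 _ h0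
  · have hshift := Complex.norm_add_one_le_norm (re_coord_le_of_wle_sStar hk1 hk2 h0 hw)
    rw [show coord lam (k + 1) - 1 = -(coord lam k + 1) by linear_combination h0, norm_neg]
    exact hshift.trans hk
  · exact hk'
  · exact (Complex.norm_add_one_le_norm (re_coord_le_of_wle_sStar hk1 hk2 h0 hw)).trans hk
  · exact hk
  · exact hC j

def partialSum (lam : Fin n → ℂ) (i : ℕ) : ℂ := ∑ j ∈ Icc 1 i, coord lam j

lemma eq_of_partialSum_eq {mu nu : Fin n → ℂ} (h : ∀ i ≤ n, partialSum mu i = partialSum nu i) :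
    mu = nu := by
  funext j
  have hsucc := h (j + 1) j.isLt
  rw [partialSum, partialSum, sum_Icc_succ_top (by omega), sum_Icc_succ_top (by omega),
    coord_fin_succ, coord_fin_succ] at hsucc
  have hj := h j j.isLt.le
  rw [partialSum, partialSum] at hj
  linear_combination hsucc - hj

lemma wle_iff_partialSum {mu nu : Fin n → ℂ} :
    wle mu nu ↔ (∀ i, 1 ≤ i → i ≤ n - 1 → ∃ m : ℕ, partialSum nu i - partialSum mu i = m) ∧
      partialSum nu n = partialSum mu n := by
  simp only [wle, partialSum, sum_sub_distrib, sub_eq_zero]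

noncomputable def weightHeight (lam : Fin n → ℂ) : ℝ := ∑ i ∈ Icc 1 (n - 1), (partialSum lam i).re

lemma weightHeight_add_one_le {mu nu : Fin n → ℂ} (h : wlt mu nu) :
    weightHeight mu + 1 ≤ weightHeight nu := by
  obtain ⟨hle, hne⟩ := h
  obtain ⟨hnat, htot⟩ := wle_iff_partialSum.mp hle
  obtain ⟨i₀, hi₀n, hi₀⟩ : ∃ i ≤ n, partialSum mu i ≠ partialSum nu i := by
    by_contra! hall
    exact hne (eq_of_partialSum_eq hall)
  have hi₀mem : i₀ ∈ Icc 1 (n - 1) := by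
    refine mem_Icc.mpr ⟨Nat.one_le_iff_ne_zero.mpr ?_, Nat.le_sub_one_of_lt ?_⟩
    · rintro rfl
      simp [partialSum] at hi₀
    · exact lt_of_le_of_ne hi₀n (by rintro rfl; exact hi₀ htot.symm)
  choose! m hm using hnat
  have hdiff : ∀ i ∈ Icc 1 (n - 1), (partialSum nu i).re - (partialSum mu i).re = m i := by
    intro i hi
    rw [← Complex.sub_re, hm i (mem_Icc.mp hi).1 (mem_Icc.mp hi).2, Complex.natCast_re]
  have hm₀ : 1 ≤ (m i₀ : ℝ) := by
    refine Nat.one_le_cast.mpr (Nat.one_le_iff_ne_zero.mpr fun h0 => hi₀ ?_)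
    have := hm i₀ (mem_Icc.mp hi₀mem).1 (mem_Icc.mp hi₀mem).2
    rw [h0, Nat.cast_zero, sub_eq_zero] at this
    exact this.symm
  calc weightHeight mu + 1 ≤ weightHeight mu + m i₀ := by linarith
    _ ≤ weightHeight mu + ∑ i ∈ Icc 1 (n - 1), (m i : ℝ) := by
      gcongr
      exact single_le_sum (fun i _ => Nat.cast_nonneg (m i)) hi₀mem
    _ = weightHeight nu := by
      rw [weightHeight, weightHeight, ← sum_congr rfl hdiff, sum_sub_distrib]
      ring

lemma weightHeight_le {lam : Fin n → ℂ} {C : ℝ} (hC : ∀ j, ‖lam j‖ ≤ C) :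
    weightHeight lam ≤ ∑ i ∈ Icc 1 (n - 1), ∑ _j ∈ Icc 1 i, C := by
  refine sum_le_sum fun i hi => ?_
  calc (partialSum lam i).re ≤ ‖partialSum lam i‖ := Complex.re_le_norm _
    _ ≤ ∑ j ∈ Icc 1 i, ‖coord lam j‖ := norm_sum_le _ _
    _ ≤ ∑ _j ∈ Icc 1 i, C := sum_le_sum fun j hj =>
      norm_coord_le hC (mem_Icc.mp hj).1 (by have := mem_Icc.mp hi; have := mem_Icc.mp hj; omega)

end Weights

theorem stmt4_general (n : ℕ) (mu : Fin n → ℂ) :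
    ∃ (s : ℕ) (nu : ℕ → Fin n → ℂ),
      nu 0 = mu ∧
      (∀ j, j < s →
        ∃ k, 1 ≤ k ∧ k ≤ n - 1 ∧ nu (j + 1) = sStar k (nu j) ∧ wlt (nu j) (nu (j + 1))) ∧
      (∀ i, 1 ≤ i → i ≤ n - 1 → ¬ wlt (nu s) (sStar i (nu s))) := by
  set C : ℝ := ∑ j, ‖mu j‖
  have hmu : ∀ j, ‖mu j‖ ≤ C := fun j =>
    single_le_sum (f := fun j => ‖mu j‖) (fun _ _ => norm_nonneg _) (mem_univ j)
  obtain ⟨s, nu, h0, hchain, hmax⟩ := exists_chain_to_maximal_of_potential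
    (r := fun a b => ∃ k, 1 ≤ k ∧ k ≤ n - 1 ∧ b = sStar k a ∧ wlt a b)
    (P := fun lam => ∀ j, ‖lam j‖ ≤ C) weightHeight _
    (by rintro a _ ⟨k, hk1, hk2, rfl, hlt⟩ ha; exact norm_sStar_le hk1 hk2 ha hlt.1)
    (by rintro a _ ⟨k, -, -, -, hlt⟩; exact weightHeight_add_one_le hlt)
    (fun _ => weightHeight_le) hmu
  exact ⟨s, nu, h0, hchain, fun i hi1 hi2 hlt => hmax _ ⟨i, hi1, hi2, rfl, hlt⟩⟩

theorem stmt4 (n : ℕ) (hn : 2 ≤ n) (mu : Fin n → ℂ) :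
    ∃ (s : ℕ) (nu : ℕ → Fin n → ℂ),
      nu 0 = mu ∧
      (∀ j, j < s →
        ∃ k, 1 ≤ k ∧ k ≤ n - 1 ∧ nu (j + 1) = sStar k (nu j) ∧ wlt (nu j) (nu (j + 1))) ∧
      (∀ i, 1 ≤ i → i ≤ n - 1 → ¬ wlt (nu s) (sStar i (nu s))) :=
  stmt4_general n mu
end

section
/- Let n = 3. There is no weight λ ∈ ℂ^3 satisfying s_1 * λ < λ < s_2 * λ < s_1 * (s_2 * λ) ≤ s_2 * (s_1 * (s_2 * λ)). Equivalently, the maximal length of an increasing W̃-string for q(3) is 4, and the maximal element of a string of length 4 is regular. -/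
open Finset

lemma wle_part1 {mu nu : Fin 3 → ℂ} (h : wle mu nu) :
    ∃ m : ℕ, coord nu 1 - coord mu 1 = (m : ℂ) := by
  obtain ⟨m, hm⟩ := h.1 1 le_rfl (by norm_num)
  exact ⟨m, by simpa using hm⟩

lemma wle_part2 {mu nu : Fin 3 → ℂ} (h : wle mu nu) :
    ∃ m : ℕ, (coord nu 1 - coord mu 1) + (coord nu 2 - coord mu 2) = (m : ℂ) := by
  obtain ⟨m, hm⟩ := h.1 2 (by norm_num) (by norm_num)
  rw [show (Finset.Icc 1 2 : Finset ℕ) = {1, 2} from rfl,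
    Finset.sum_pair (by norm_num)] at hm
  exact ⟨m, hm⟩

lemma stmt5_key (a b c : ℂ)
    (hne1a : a + b ≠ 0 → a ≠ b)
    (hne1b : a + b = 0 → b - 1 ≠ a)
    (h1 : ∃ m : ℕ, a - (if a + b = 0 then b - 1 else b) = (m : ℂ))
    (h2 : ∃ m : ℕ, (if b + c = 0 then c - 1 else c) - b = (m : ℂ))
    (h4 : ∃ m : ℕ,
      (if (if a + (if b + c = 0 then c - 1 else c) = 0 then a + 1 else a) +
            (if b + c = 0 then b + 1 else b) = 0
        then (if b + c = 0 then b + 1 else b) - 1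
        else (if b + c = 0 then b + 1 else b)) -
        (if a + (if b + c = 0 then c - 1 else c) = 0 then a + 1 else a) = (m : ℂ)) :
    False := by
  obtain ⟨m1, hm1⟩ := h1
  obtain ⟨m2, hm2⟩ := h2
  obtain ⟨m4, hm4⟩ := h4
  by_cases hbc : b + c = 0
  · simp only [if_pos hbc] at hm2 hm4
    by_cases hd : a + (c - 1) = 0
    · simp only [if_pos hd] at hm4
      by_cases h5 : (a + 1) + (b + 1) = 0
      · rw [if_pos h5] at hm4
        have h6 : ((m4 + 2 : ℕ) : ℂ) = ((0 : ℕ) : ℂ) := by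
          push_cast; linear_combination -hm4 + hbc - hd
        have : m4 + 2 = 0 := by exact_mod_cast h6
        omega
      · rw [if_neg h5] at hm4
        have h6 : ((m4 + 1 : ℕ) : ℂ) = ((0 : ℕ) : ℂ) := by
          push_cast; linear_combination -hm4 + hbc - hd
        have : m4 + 1 = 0 := by exact_mod_cast h6
        omega
    · simp only [if_neg hd] at hm4
      by_cases hab : a + b = 0
      · rw [if_pos hab] at hm1
        have h5 : a + (b + 1) ≠ 0 := by
          rw [show a + (b + 1) = (a + b) + 1 by ring, hab]; norm_num
        rw [if_neg h5] at hm4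
        have e1 : ((m1 : ℕ) : ℂ) = ((m2 + 2 : ℕ) : ℂ) := by
          push_cast; linear_combination -hm1 + hm2 + hab - hbc
        have e2 : ((m1 + m4 : ℕ) : ℂ) = ((2 : ℕ) : ℂ) := by
          push_cast; linear_combination -hm1 - hm4
        have n1 : m1 = m2 + 2 := by exact_mod_cast e1
        have n2 : m1 + m4 = 2 := by exact_mod_cast e2
        have hm40 : m4 = 0 := by omega
        rw [hm40] at hm4
        push_cast at hm4
        exact hd (by linear_combination -hm4 + hbc)
      · rw [if_neg hab] at hm1
        have hm1ne : m1 ≠ 0 := by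
          intro h; rw [h] at hm1; push_cast at hm1
          exact hne1a hab (sub_eq_zero.mp hm1)
        by_cases h5 : a + (b + 1) = 0
        · rw [if_pos h5] at hm4
          have h6 : ((m1 + m4 : ℕ) : ℂ) = ((0 : ℕ) : ℂ) := by
            push_cast; linear_combination -hm1 - hm4
          have : m1 + m4 = 0 := by exact_mod_cast h6
          omega
        · rw [if_neg h5] at hm4
          have h6 : ((m1 + m4 : ℕ) : ℂ) = ((1 : ℕ) : ℂ) := by
            push_cast; linear_combination -hm1 - hm4
          have e2 : m1 + m4 = 1 := by exact_mod_cast h6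
          have hm40 : m4 = 0 := by omega
          rw [hm40] at hm4
          push_cast at hm4
          exact hd (by linear_combination -hm4 + hbc)
  · simp only [if_neg hbc] at hm2 hm4
    by_cases hac : a + c = 0
    · simp only [if_pos hac] at hm4
      by_cases hab : a + b = 0
      · rw [if_pos hab] at hm1
        have hm1ne : m1 ≠ 0 := by
          intro h; rw [h] at hm1; push_cast at hm1
          exact hne1b hab (by linear_combination -hm1)
        have h5 : (a + 1) + b ≠ 0 := by
          rw [show (a + 1) + b = (a + b) + 1 by ring, hab]; norm_num
        rw [if_neg h5] at hm4
        have h6 : ((m1 + m4 : ℕ) : ℂ) = ((0 : ℕ) : ℂ) := by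
          push_cast; linear_combination -hm1 - hm4
        have : m1 + m4 = 0 := by exact_mod_cast h6
        omega
      · rw [if_neg hab] at hm1
        have hm1ne : m1 ≠ 0 := by
          intro h; rw [h] at hm1; push_cast at hm1
          exact hne1a hab (sub_eq_zero.mp hm1)
        by_cases h5 : (a + 1) + b = 0
        · rw [if_pos h5] at hm4
          have h6 : ((m1 + m4 + 2 : ℕ) : ℂ) = ((0 : ℕ) : ℂ) := by
            push_cast; linear_combination -hm1 - hm4
          have : m1 + m4 + 2 = 0 := by exact_mod_cast h6
          omega
        · rw [if_neg h5] at hm4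
          have h6 : ((m1 + m4 + 1 : ℕ) : ℂ) = ((0 : ℕ) : ℂ) := by
            push_cast; linear_combination -hm1 - hm4
          have : m1 + m4 + 1 = 0 := by exact_mod_cast h6
          omega
    · simp only [if_neg hac] at hm4
      by_cases hab : a + b = 0
      · rw [if_pos hab] at hm1
        rw [if_pos hab] at hm4
        have hm1ne : m1 ≠ 0 := by
          intro h; rw [h] at hm1; push_cast at hm1
          exact hne1b hab (by linear_combination -hm1)
        have h6 : ((m1 + m4 : ℕ) : ℂ) = ((0 : ℕ) : ℂ) := by
          push_cast; linear_combination -hm1 - hm4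
        have : m1 + m4 = 0 := by exact_mod_cast h6
        omega
      · rw [if_neg hab] at hm1
        rw [if_neg hab] at hm4
        have hm1ne : m1 ≠ 0 := by
          intro h; rw [h] at hm1; push_cast at hm1
          exact hne1a hab (sub_eq_zero.mp hm1)
        have h6 : ((m1 + m4 : ℕ) : ℂ) = ((0 : ℕ) : ℂ) := by
          push_cast; linear_combination -hm1 - hm4
        have : m1 + m4 = 0 := by exact_mod_cast h6
        omega

theorem stmt5 :
    ¬ ∃ lam : Fin 3 → ℂ,
      wlt (sStar 1 lam) lam ∧
      wlt lam (sStar 2 lam) ∧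
      wlt (sStar 2 lam) (sStar 1 (sStar 2 lam)) ∧
      wle (sStar 1 (sStar 2 lam)) (sStar 2 (sStar 1 (sStar 2 lam))) := by
  rintro ⟨lam, h1, h2, _h3, h4⟩
  have hne1a : lam 0 + lam 1 ≠ 0 → lam 0 ≠ lam 1 := by
    intro h h'
    apply h1.2
    funext j
    fin_cases j
    · show (if lam 0 + lam 1 = 0 then lam 1 - 1 else lam 1) = lam 0
      rw [if_neg h]; exact h'.symm
    · show (if lam 0 + lam 1 = 0 then lam 0 + 1 else lam 0) = lam 1
      rw [if_neg h]; exact h'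
    · rfl
  have hne1b : lam 0 + lam 1 = 0 → lam 1 - 1 ≠ lam 0 := by
    intro h h'
    apply h1.2
    funext j
    fin_cases j
    · show (if lam 0 + lam 1 = 0 then lam 1 - 1 else lam 1) = lam 0
      rw [if_pos h]; exact h'
    · show (if lam 0 + lam 1 = 0 then lam 0 + 1 else lam 0) = lam 1
      rw [if_pos h]; linear_combination -h'
    · rfl
  obtain ⟨m1, hm1⟩ := wle_part1 h1.1
  have hm1' : lam 0 - (if lam 0 + lam 1 = 0 then lam 1 - 1 else lam 1) = (m1 : ℂ) := hm1
  obtain ⟨m2, hm2⟩ := wle_part2 h2.1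
  have hm2' : (if lam 1 + lam 2 = 0 then lam 2 - 1 else lam 2) - lam 1 = (m2 : ℂ) := by
    have h' : (lam 0 - lam 0) +
        ((if lam 1 + lam 2 = 0 then lam 2 - 1 else lam 2) - lam 1) = (m2 : ℂ) := hm2
    linear_combination h'
  obtain ⟨m4, hm4⟩ := wle_part2 h4
  have hm4' :
      (if (if lam 0 + (if lam 1 + lam 2 = 0 then lam 2 - 1 else lam 2) = 0
              then lam 0 + 1 else lam 0) +
            (if lam 1 + lam 2 = 0 then lam 1 + 1 else lam 1) = 0
        then (if lam 1 + lam 2 = 0 then lam 1 + 1 else lam 1) - 1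
        else (if lam 1 + lam 2 = 0 then lam 1 + 1 else lam 1)) -
        (if lam 0 + (if lam 1 + lam 2 = 0 then lam 2 - 1 else lam 2) = 0
          then lam 0 + 1 else lam 0) = (m4 : ℂ) := by
    have h' : ((if lam 0 + (if lam 1 + lam 2 = 0 then lam 2 - 1 else lam 2) = 0
            then (if lam 1 + lam 2 = 0 then lam 2 - 1 else lam 2) - 1
            else (if lam 1 + lam 2 = 0 then lam 2 - 1 else lam 2)) -
          (if lam 0 + (if lam 1 + lam 2 = 0 then lam 2 - 1 else lam 2) = 0
            then (if lam 1 + lam 2 = 0 then lam 2 - 1 else lam 2) - 1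
            else (if lam 1 + lam 2 = 0 then lam 2 - 1 else lam 2))) +
        ((if (if lam 0 + (if lam 1 + lam 2 = 0 then lam 2 - 1 else lam 2) = 0
                then lam 0 + 1 else lam 0) +
              (if lam 1 + lam 2 = 0 then lam 1 + 1 else lam 1) = 0
          then (if lam 1 + lam 2 = 0 then lam 1 + 1 else lam 1) - 1
          else (if lam 1 + lam 2 = 0 then lam 1 + 1 else lam 1)) -
          (if lam 0 + (if lam 1 + lam 2 = 0 then lam 2 - 1 else lam 2) = 0
            then lam 0 + 1 else lam 0)) = (m4 : ℂ) := hm4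
    linear_combination h'
  exact stmt5_key (lam 0) (lam 1) (lam 2) hne1a hne1b ⟨m1, hm1'⟩ ⟨m2, hm2'⟩ ⟨m4, hm4'⟩
end

section
/- Let λ = (a_1,…,a_n) ∈ ℂ^n satisfy a_i − a_{i+1} ∈ ℤ_{>0} for 1 ≤ i ≤ n−2 and a_{n−1} ≻ a_n. Set (b_1,…,b_n) := s_1 s_2 ⋯ s_{n−1} * λ. Then b_n − a_{n−1} ∈ {0, 1}, and b_i − b_{i+1} ∈ ℤ_{>0} for all 2 ≤ i ≤ n−1. -/
open Finset

/-!
Applying `s_{n-1}` first and `s_1` last, the product `s_1 ⋯ s_{n-1}` carries a single travelling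
entry leftwards through `λ`. When it passes `a_i`, that entry settles in position `i + 1` as
`b_{i+1} = a_i + ε_i` with a carry `ε_i ∈ {0, 1}` (equal to `1` iff `a_i` plus the travelling
entry vanishes), and the travelling entry drops by `ε_i`. Hence `b_{i+1} - b_{i+2}` equals
`(a_i - a_{i+1}) + ε_i - ε_{i+1}`, which could only fail to be positive if `a_i - a_{i+1} = 1`,
`ε_i = 0` and `ε_{i+1} = 1`. But `ε_{i+1} = 1` leaves the travelling entry equal to
`-a_{i+1} - 1 = -a_i`, which forces `ε_i = 1`.
-/

/-- The carry of the star action on a pair `(x, y)`: it acts as `(x, y) ↦ (y - ε, x + ε)`. -/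
noncomputable def carry (x y : ℂ) : ℤ := if x + y = 0 then 1 else 0

lemma carry_eq_zero_or_one (x y : ℂ) : (carry x y : ℂ) = 0 ∨ (carry x y : ℂ) = 1 := by
  unfold carry
  split_ifs <;> simp

lemma carry_nonneg (x y : ℂ) : 0 ≤ carry x y := by
  unfold carry
  split_ifs <;> omega

lemma carry_sub_carry_pos {x x' y : ℂ} {m : ℤ} (hm : 0 < m) (h : x - x' = m) :
    0 < m + carry x (y - carry x' y) - carry x' y := by
  by_cases hy : x' + y = 0
  · have hcy : carry x' y = 1 := if_pos hy
    rw [hcy, Int.cast_one]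
    obtain rfl | hm1 := eq_or_ne m 1
    · have hcx : carry x (y - 1) = 1 := if_pos (by push_cast at h; linear_combination h + hy)
      omega
    · have := carry_nonneg x (y - 1)
      omega
  · have hcy : carry x' y = 0 := if_neg hy
    have := carry_nonneg x (y - carry x' y)
    omega

section sStar

variable {n : ℕ} (i : ℕ) (mu : Fin n → ℂ)

lemma coord_sStar_of_ne {p : ℕ} (hpi : p ≠ i) (hpi' : p ≠ i + 1) :
    coord (sStar i mu) p = coord mu p := by
  unfold coord
  split_ifs with hp
  · simp only [sStar]
    rw [if_neg (by omega), if_neg (by omega)]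
  · rfl

lemma coord_sStar_self_s7 (hi : 1 ≤ i) (hin : i + 1 ≤ n) :
    coord (sStar i mu) i = coord mu (i + 1) - carry (coord mu i) (coord mu (i + 1)) := by
  rw [coord, dif_pos ⟨hi, by omega⟩]
  simp only [sStar, carry]
  rw [if_pos (by omega)]
  split_ifs <;> simp

lemma coord_sStar_succ (hi : 1 ≤ i) (hin : i + 1 ≤ n) :
    coord (sStar i mu) (i + 1) = coord mu i + carry (coord mu i) (coord mu (i + 1)) := by
  rw [coord, dif_pos ⟨by omega, hin⟩]
  simp only [sStar, carry]
  rw [if_neg (by omega), if_pos (by omega)]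
  split_ifs <;> simp

end sStar

section starDesc

variable {n : ℕ} (K : ℕ) (lam : Fin n → ℂ)

lemma starDesc_of_lt {j : ℕ} (h : K < j) : starDesc j K lam = lam := by
  rw [starDesc, Nat.sub_eq_zero_of_le h]
  rfl

lemma starDesc_eq_sStar_starDesc {j : ℕ} (h : j ≤ K) :
    starDesc j K lam = sStar j (starDesc (j + 1) K lam) := by
  rw [starDesc, starDesc, show K + 1 - j = (K + 1 - (j + 1)) + 1 by omega, List.range'_succ]
  rfl

lemma coord_starDesc_of_lt {j p : ℕ} (h : p < j) :
    coord (starDesc j K lam) p = coord lam p := by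
  by_cases hj : j ≤ K
  · induction hj using Nat.decreasingInduction with
    | self =>
      rw [starDesc_eq_sStar_starDesc K lam le_rfl, coord_sStar_of_ne _ _ (by omega) (by omega),
        starDesc_of_lt K lam (by omega)]
    | of_succ j hj ih =>
      rw [starDesc_eq_sStar_starDesc K lam (by omega), coord_sStar_of_ne _ _ (by omega) (by omega),
        ih (by omega)]
  · rw [starDesc_of_lt K lam (by omega)]

lemma coord_starDesc_eq_coord_starDesc_succ {j p : ℕ} (h : j + 1 < p) :
    coord (starDesc j K lam) p = coord (starDesc (j + 1) K lam) p := by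
  by_cases hj : j ≤ K
  · rw [starDesc_eq_sStar_starDesc K lam hj, coord_sStar_of_ne _ _ (by omega) (by omega)]
  · rw [starDesc_of_lt K lam (by omega), starDesc_of_lt K lam (by omega)]

lemma coord_starDesc_of_le {j k : ℕ} (h : j ≤ k) :
    coord (starDesc j K lam) (k + 1) = coord (starDesc k K lam) (k + 1) := by
  induction h using Nat.decreasingInduction with
  | self => rfl
  | of_succ j hj ih => rw [coord_starDesc_eq_coord_starDesc_succ K lam (by omega), ih]

lemma coord_starDesc_self {k : ℕ} (hk : 1 ≤ k) (hkK : k ≤ K) (hkn : k + 1 ≤ n) :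
    coord (starDesc k K lam) k = coord (starDesc (k + 1) K lam) (k + 1)
      - carry (coord lam k) (coord (starDesc (k + 1) K lam) (k + 1)) := by
  rw [starDesc_eq_sStar_starDesc K lam hkK, coord_sStar_self_s7 _ _ hk hkn,
    coord_starDesc_of_lt K lam (Nat.lt_succ_self k)]

lemma coord_starDesc_succ {j k : ℕ} (hk : 1 ≤ k) (hkK : k ≤ K) (hkn : k + 1 ≤ n)
    (hjk : j ≤ k) :
    coord (starDesc j K lam) (k + 1) =
      coord lam k + carry (coord lam k) (coord (starDesc (k + 1) K lam) (k + 1)) := by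
  rw [coord_starDesc_of_le K lam hjk, starDesc_eq_sStar_starDesc K lam hkK,
    coord_sStar_succ _ _ hk hkn, coord_starDesc_of_lt K lam (Nat.lt_succ_self k)]

end starDesc

theorem stmt7_general (n : ℕ) (hn : 2 ≤ n) (lam : Fin n → ℂ)
    (h1 : ∀ i, 1 ≤ i → i ≤ n - 2 → ∃ m : ℤ, 0 < m ∧ coord lam i - coord lam (i + 1) = (m : ℂ)) :
    (coord (starDesc 1 (n - 1) lam) n - coord lam (n - 1) = 0 ∨
     coord (starDesc 1 (n - 1) lam) n - coord lam (n - 1) = 1) ∧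
    (∀ i, 2 ≤ i → i ≤ n - 1 →
      ∃ m : ℤ, 0 < m ∧
        coord (starDesc 1 (n - 1) lam) i - coord (starDesc 1 (n - 1) lam) (i + 1) = (m : ℂ)) := by
  set X : ℕ → ℂ := fun k => coord (starDesc k (n - 1) lam) k
  constructor
  · obtain ⟨k, rfl⟩ : ∃ k, n = k + 1 := ⟨n - 1, by omega⟩
    rw [Nat.add_sub_cancel, coord_starDesc_succ k lam (by omega) le_rfl le_rfl (by omega),
      add_sub_cancel_left]
    exact carry_eq_zero_or_one _ _
  · intro i hi hin
    obtain ⟨k, rfl⟩ : ∃ k, i = k + 1 := ⟨i - 1, by omega⟩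
    obtain ⟨m, hm, hdiff⟩ := h1 k (by omega) (by omega)
    have hb : coord (starDesc 1 (n - 1) lam) (k + 1) =
        coord lam k + carry (coord lam k) (X (k + 1)) :=
      coord_starDesc_succ _ lam (by omega) (by omega) (by omega) (by omega)
    have hb' : coord (starDesc 1 (n - 1) lam) (k + 2) =
        coord lam (k + 1) + carry (coord lam (k + 1)) (X (k + 2)) :=
      coord_starDesc_succ _ lam (by omega) (by omega) (by omega) (by omega)
    have hX : X (k + 1) = X (k + 2) - carry (coord lam (k + 1)) (X (k + 2)) :=
      coord_starDesc_self _ lam (by omega) (by omega) (by omega)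
    refine ⟨_, carry_sub_carry_pos (y := X (k + 2)) hm hdiff, ?_⟩
    rw [hb, hb', ← hX]
    push_cast
    linear_combination hdiff

theorem stmt7 (n : ℕ) (hn : 2 ≤ n) (lam : Fin n → ℂ)
    (h1 : ∀ i, 1 ≤ i → i ≤ n - 2 → ∃ m : ℤ, 0 < m ∧ coord lam i - coord lam (i + 1) = (m : ℂ))
    (h2 : csucc (coord lam (n - 1)) (coord lam n)) :
    (coord (starDesc 1 (n - 1) lam) n - coord lam (n - 1) = 0 ∨
     coord (starDesc 1 (n - 1) lam) n - coord lam (n - 1) = 1) ∧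
    (∀ i, 2 ≤ i → i ≤ n - 1 →
      ∃ m : ℤ, 0 < m ∧
        coord (starDesc 1 (n - 1) lam) i - coord (starDesc 1 (n - 1) lam) (i + 1) = (m : ℂ)) :=
  stmt7_general n hn lam h1
end

section
/- For every 1 ≤ i ≤ n−2 and every λ ∈ ℂ^n, applying the star action of s_i s_{i+1} one hundred eighty times returns λ; that is, if T : ℂ^n → ℂ^n is defined by T(λ) = s_i * (s_{i+1} * λ), then T^{180}(λ) = λ for all λ ∈ ℂ^n. In particular, in the group of transformations of ℂ^n generated by the star reflections one has (s_i s_{i+1})^{180} = 1. -/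
open Finset

/-- the local map on triples -/
noncomputable def t : ℂ × ℂ × ℂ → ℂ × ℂ × ℂ
  | (a, b, c) =>
    if b + c = 0 then
      if a + (c - 1) = 0 then (c - 1 - 1, a + 1, b + 1) else (c - 1, a, b + 1)
    else
      if a + c = 0 then (c - 1, a + 1, b) else (c, a, b)

lemma t_zz {a b c : ℂ} (h1 : b + c = 0) (h2 : a + (c - 1) = 0) :
    t (a, b, c) = (c - 1 - 1, a + 1, b + 1) := by simp only [t, if_pos h1, if_pos h2]

lemma t_zs {a b c : ℂ} (h1 : b + c = 0) (h2 : a + (c - 1) ≠ 0) :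
    t (a, b, c) = (c - 1, a, b + 1) := by simp only [t, if_pos h1, if_neg h2]

lemma t_sz {a b c : ℂ} (h1 : b + c ≠ 0) (h2 : a + c = 0) :
    t (a, b, c) = (c - 1, a + 1, b) := by simp only [t, if_neg h1, if_pos h2]

lemma t_ss {a b c : ℂ} (h1 : b + c ≠ 0) (h2 : a + c ≠ 0) :
    t (a, b, c) = (c, a, b) := by simp only [t, if_neg h1, if_neg h2]

noncomputable def patch {n : ℕ} (i : ℕ) (lam : Fin n → ℂ) (p : ℂ × ℂ × ℂ) : Fin n → ℂ := fun j =>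
  if (j : ℕ) + 1 = i then p.1
  else if (j : ℕ) = i then p.2.1
  else if (j : ℕ) = i + 1 then p.2.2
  else lam j

lemma coordp1 {n : ℕ} {i : ℕ} (hi : 1 ≤ i) (hin : i + 2 ≤ n) (lam : Fin n → ℂ) (a b c : ℂ) :
    coord (patch i lam (a, b, c)) i = a := by
  unfold coord
  rw [dif_pos (⟨hi, by omega⟩ : 1 ≤ i ∧ i ≤ n)]
  simp only [patch]
  rw [if_pos (show i - 1 + 1 = i by omega)]

lemma coordp2 {n : ℕ} {i : ℕ} (hi : 1 ≤ i) (hin : i + 2 ≤ n) (lam : Fin n → ℂ) (a b c : ℂ) :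
    coord (patch i lam (a, b, c)) (i + 1) = b := by
  unfold coord
  rw [dif_pos (⟨by omega, by omega⟩ : 1 ≤ i + 1 ∧ i + 1 ≤ n)]
  simp only [patch]
  rw [if_neg (show ¬ (i + 1 - 1 + 1 = i) by omega), if_pos (show i + 1 - 1 = i by omega)]

lemma coordp3 {n : ℕ} {i : ℕ} (hi : 1 ≤ i) (hin : i + 2 ≤ n) (lam : Fin n → ℂ) (a b c : ℂ) :
    coord (patch i lam (a, b, c)) (i + 1 + 1) = c := by
  unfold coord
  rw [dif_pos (⟨by omega, by omega⟩ : 1 ≤ i + 1 + 1 ∧ i + 1 + 1 ≤ n)]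
  simp only [patch]
  rw [if_neg (show ¬ (i + 1 + 1 - 1 + 1 = i) by omega),
    if_neg (show ¬ (i + 1 + 1 - 1 = i) by omega),
    if_pos (show i + 1 + 1 - 1 = i + 1 by omega)]

lemma inner_z {n : ℕ} {i : ℕ} (hi : 1 ≤ i) (hin : i + 2 ≤ n) (lam : Fin n → ℂ) (a b c : ℂ)
    (h : b + c = 0) :
    sStar (i + 1) (patch i lam (a, b, c)) = patch i lam (a, c - 1, b + 1) := by
  funext j
  simp only [sStar, coordp2 hi hin, coordp3 hi hin, if_pos h, patch]
  split_ifs <;> first | rfl | omega | (exfalso; omega)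

lemma inner_s {n : ℕ} {i : ℕ} (hi : 1 ≤ i) (hin : i + 2 ≤ n) (lam : Fin n → ℂ) (a b c : ℂ)
    (h : ¬ (b + c = 0)) :
    sStar (i + 1) (patch i lam (a, b, c)) = patch i lam (a, c, b) := by
  funext j
  simp only [sStar, coordp2 hi hin, coordp3 hi hin, if_neg h, patch]
  split_ifs <;> first | rfl | omega | (exfalso; omega)

lemma outer_z {n : ℕ} {i : ℕ} (hi : 1 ≤ i) (hin : i + 2 ≤ n) (lam : Fin n → ℂ) (a b c : ℂ)
    (h : a + b = 0) :
    sStar i (patch i lam (a, b, c)) = patch i lam (b - 1, a + 1, c) := by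
  funext j
  simp only [sStar, coordp1 hi hin, coordp2 hi hin, if_pos h, patch]
  split_ifs <;> first | rfl | omega | (exfalso; omega)

lemma outer_s {n : ℕ} {i : ℕ} (hi : 1 ≤ i) (hin : i + 2 ≤ n) (lam : Fin n → ℂ) (a b c : ℂ)
    (h : ¬ (a + b = 0)) :
    sStar i (patch i lam (a, b, c)) = patch i lam (b, a, c) := by
  funext j
  simp only [sStar, coordp1 hi hin, coordp2 hi hin, if_neg h, patch]
  split_ifs <;> first | rfl | omega | (exfalso; omega)

lemma step_patch {n : ℕ} {i : ℕ} (hi : 1 ≤ i) (hin : i + 2 ≤ n) (lam : Fin n → ℂ)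
    (p : ℂ × ℂ × ℂ) :
    sStar i (sStar (i + 1) (patch i lam p)) = patch i lam (t p) := by
  obtain ⟨a, b, c⟩ := p
  by_cases h1 : b + c = 0
  · rw [inner_z hi hin lam a b c h1]
    by_cases h2 : a + (c - 1) = 0
    · rw [outer_z hi hin lam a (c-1) (b+1) h2, t_zz h1 h2]
    · rw [outer_s hi hin lam a (c-1) (b+1) h2, t_zs h1 h2]
  · rw [inner_s hi hin lam a b c h1]
    by_cases h2 : a + c = 0
    · rw [outer_z hi hin lam a c b h2, t_sz h1 h2]
    · rw [outer_s hi hin lam a c b h2, t_ss h1 h2]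

lemma patch_self {n : ℕ} {i : ℕ} (hi : 1 ≤ i) (hin : i + 2 ≤ n) (lam : Fin n → ℂ) :
    patch i lam (coord lam i, coord lam (i + 1), coord lam (i + 1 + 1)) = lam := by
  funext j
  simp only [patch, coord]
  split_ifs <;> first | rfl | (exfalso; omega) | (congr 1; exact Fin.ext (by simp only [Fin.val_mk]; omega))

lemma t180 (a b c : ℂ) : t^[180] (a, b, c) = (a, b, c) := by
  by_cases h1 : b + c = 0
  · -- case true
    by_cases h2 : a + (c - 1) = 0
    · -- case true
      have e3 : t (a, b, c) = ((c - 1 - 1), (a + 1), (b + 1)) := t_zz h1 h2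
      by_cases h4 : (a + 1) + (b + 1) = 0
      · -- case true
        by_cases h5 : (c - 1 - 1) + ((b + 1) - 1) = 0
        · exact absurd (show (1 : ℂ) = 0 by linear_combination ((1 : ℂ)/2) * h1 + ((-1 : ℂ)/2) * h5) one_ne_zero
        · -- case false
          have e6 : t ((c - 1 - 1), (a + 1), (b + 1)) = (((b + 1) - 1), (c - 1 - 1), ((a + 1) + 1)) := t_zs h4 h5
          by_cases h7 : (c - 1 - 1) + ((a + 1) + 1) = 0
          · exact absurd (show (1 : ℂ) = 0 by linear_combination (-1 : ℂ) * h2 + (1 : ℂ) * h7) one_ne_zero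
          · -- case false
            have h8 : ((b + 1) - 1) + ((a + 1) + 1) = 0 := by linear_combination (1 : ℂ) * h4
            have e9 : t (((b + 1) - 1), (c - 1 - 1), ((a + 1) + 1)) = ((((a + 1) + 1) - 1), (((b + 1) - 1) + 1), (c - 1 - 1)) := t_sz h7 h8
            by_cases h10 : (((b + 1) - 1) + 1) + (c - 1 - 1) = 0
            · exact absurd (show (1 : ℂ) = 0 by linear_combination (1 : ℂ) * h1 + (-1 : ℂ) * h10) one_ne_zero
            · -- case false
              have h11 : (((a + 1) + 1) - 1) + (c - 1 - 1) = 0 := by linear_combination (1 : ℂ) * h2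
              have e12 : t ((((a + 1) + 1) - 1), (((b + 1) - 1) + 1), (c - 1 - 1)) = (((c - 1 - 1) - 1), ((((a + 1) + 1) - 1) + 1), (((b + 1) - 1) + 1)) := t_sz h10 h11
              have h13 : ¬(((((a + 1) + 1) - 1) + 1) + (((b + 1) - 1) + 1) = 0) := fun hh => h7 (by linear_combination (1 : ℂ) * hh + (1 : ℂ) * h2 + (-1 : ℂ) * h4)
              have h14 : ¬(((c - 1 - 1) - 1) + (((b + 1) - 1) + 1) = 0) := fun hh => h5 (by linear_combination (1 : ℂ) * hh)
              have e15 : t (((c - 1 - 1) - 1), ((((a + 1) + 1) - 1) + 1), (((b + 1) - 1) + 1)) = ((((b + 1) - 1) + 1), ((c - 1 - 1) - 1), ((((a + 1) + 1) - 1) + 1)) := t_ss h13 h14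
              have hfix : t^[5] (a, b, c) = (a, b, c) := by
                show t (t (t (t (t ((a, b, c)))))) = (a, b, c)
                rw [e3, e6, e9, e12, e15]
                rw [Prod.mk.injEq, Prod.mk.injEq]
                exact ⟨by linear_combination (1 : ℂ) * h1 + (-1 : ℂ) * h2, by linear_combination (1 : ℂ) * h2 + (-1 : ℂ) * h4, by linear_combination (-1 : ℂ) * h1 + (1 : ℂ) * h4⟩
              rw [show (180 : ℕ) = 5 * 36 from rfl, Function.iterate_mul]
              exact Function.iterate_fixed hfix 36
      · -- case false
        by_cases h16 : (c - 1 - 1) + (b + 1) = 0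
        · exact absurd (show (1 : ℂ) = 0 by linear_combination (1 : ℂ) * h1 + (-1 : ℂ) * h16) one_ne_zero
        · -- case false
          have e17 : t ((c - 1 - 1), (a + 1), (b + 1)) = ((b + 1), (c - 1 - 1), (a + 1)) := t_ss h4 h16
          have h18 : (c - 1 - 1) + (a + 1) = 0 := by linear_combination (1 : ℂ) * h2
          by_cases h19 : (b + 1) + ((a + 1) - 1) = 0
          · -- case true
            have e20 : t ((b + 1), (c - 1 - 1), (a + 1)) = (((a + 1) - 1 - 1), ((b + 1) + 1), ((c - 1 - 1) + 1)) := t_zz h18 h19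
            have h21 : ¬(((b + 1) + 1) + ((c - 1 - 1) + 1) = 0) := fun hh => h4 (by linear_combination (1 : ℂ) * hh + (-1 : ℂ) * h1 + (1 : ℂ) * h19)
            have h22 : ¬(((a + 1) - 1 - 1) + ((c - 1 - 1) + 1) = 0) := fun hh => h16 (by linear_combination (1 : ℂ) * hh + (1 : ℂ) * h1 + (-1 : ℂ) * h2)
            have e23 : t (((a + 1) - 1 - 1), ((b + 1) + 1), ((c - 1 - 1) + 1)) = (((c - 1 - 1) + 1), ((a + 1) - 1 - 1), ((b + 1) + 1)) := t_ss h21 h22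
            have hfix : t^[4] (a, b, c) = (a, b, c) := by
              show t (t (t (t ((a, b, c))))) = (a, b, c)
              rw [e3, e17, e20, e23]
              rw [Prod.mk.injEq, Prod.mk.injEq]
              exact ⟨by linear_combination (1 : ℂ) * h1 + (-1 : ℂ) * h19, by linear_combination (-1 : ℂ) * h1 + (1 : ℂ) * h2, by linear_combination (-1 : ℂ) * h2 + (1 : ℂ) * h19⟩
            rw [show (180 : ℕ) = 4 * 45 from rfl, Function.iterate_mul]
            exact Function.iterate_fixed hfix 45
          · -- case false
            have e24 : t ((b + 1), (c - 1 - 1), (a + 1)) = (((a + 1) - 1), (b + 1), ((c - 1 - 1) + 1)) := t_zs h18 h19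
            have h25 : (b + 1) + ((c - 1 - 1) + 1) = 0 := by linear_combination (1 : ℂ) * h1
            have h26 : ¬(((a + 1) - 1) + (((c - 1 - 1) + 1) - 1) = 0) := fun hh => h16 (by linear_combination (1 : ℂ) * hh + (1 : ℂ) * h1 + (-1 : ℂ) * h2)
            have e27 : t (((a + 1) - 1), (b + 1), ((c - 1 - 1) + 1)) = ((((c - 1 - 1) + 1) - 1), ((a + 1) - 1), ((b + 1) + 1)) := t_zs h25 h26
            have h28 : ¬(((a + 1) - 1) + ((b + 1) + 1) = 0) := fun hh => h4 (by linear_combination (1 : ℂ) * hh)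
            have h29 : (((c - 1 - 1) + 1) - 1) + ((b + 1) + 1) = 0 := by linear_combination (1 : ℂ) * h1
            have e30 : t ((((c - 1 - 1) + 1) - 1), ((a + 1) - 1), ((b + 1) + 1)) = ((((b + 1) + 1) - 1), ((((c - 1 - 1) + 1) - 1) + 1), ((a + 1) - 1)) := t_sz h28 h29
            have h31 : ((((c - 1 - 1) + 1) - 1) + 1) + ((a + 1) - 1) = 0 := by linear_combination (1 : ℂ) * h2
            by_cases h32 : (((b + 1) + 1) - 1) + (((a + 1) - 1) - 1) = 0
            · -- case true
              have e33 : t ((((b + 1) + 1) - 1), ((((c - 1 - 1) + 1) - 1) + 1), ((a + 1) - 1)) = ((((a + 1) - 1) - 1 - 1), ((((b + 1) + 1) - 1) + 1), (((((c - 1 - 1) + 1) - 1) + 1) + 1)) := t_zz h31 h32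
              have h34 : ¬(((((b + 1) + 1) - 1) + 1) + (((((c - 1 - 1) + 1) - 1) + 1) + 1) = 0) := fun hh => h4 (by linear_combination (1 : ℂ) * hh + (-1 : ℂ) * h1 + (1 : ℂ) * h32)
              have h35 : ¬((((a + 1) - 1) - 1 - 1) + (((((c - 1 - 1) + 1) - 1) + 1) + 1) = 0) := fun hh => h16 (by linear_combination (1 : ℂ) * hh + (1 : ℂ) * h1 + (-1 : ℂ) * h2)
              have e36 : t ((((a + 1) - 1) - 1 - 1), ((((b + 1) + 1) - 1) + 1), (((((c - 1 - 1) + 1) - 1) + 1) + 1)) = ((((((c - 1 - 1) + 1) - 1) + 1) + 1), (((a + 1) - 1) - 1 - 1), ((((b + 1) + 1) - 1) + 1)) := t_ss h34 h35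
              have h37 : (((a + 1) - 1) - 1 - 1) + ((((b + 1) + 1) - 1) + 1) = 0 := by linear_combination (1 : ℂ) * h32
              have h38 : ¬((((((c - 1 - 1) + 1) - 1) + 1) + 1) + (((((b + 1) + 1) - 1) + 1) - 1) = 0) := fun hh => h19 (by linear_combination (1 : ℂ) * hh + (-1 : ℂ) * h1 + (1 : ℂ) * h32)
              have e39 : t ((((((c - 1 - 1) + 1) - 1) + 1) + 1), (((a + 1) - 1) - 1 - 1), ((((b + 1) + 1) - 1) + 1)) = ((((((b + 1) + 1) - 1) + 1) - 1), (((((c - 1 - 1) + 1) - 1) + 1) + 1), ((((a + 1) - 1) - 1 - 1) + 1)) := t_zs h37 h38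
              have h40 : (((((c - 1 - 1) + 1) - 1) + 1) + 1) + ((((a + 1) - 1) - 1 - 1) + 1) = 0 := by linear_combination (1 : ℂ) * h2
              have h41 : ¬((((((b + 1) + 1) - 1) + 1) - 1) + (((((a + 1) - 1) - 1 - 1) + 1) - 1) = 0) := fun hh => h16 (by linear_combination (1 : ℂ) * hh + (1 : ℂ) * h1 + (-1 : ℂ) * h32)
              have e42 : t ((((((b + 1) + 1) - 1) + 1) - 1), (((((c - 1 - 1) + 1) - 1) + 1) + 1), ((((a + 1) - 1) - 1 - 1) + 1)) = ((((((a + 1) - 1) - 1 - 1) + 1) - 1), (((((b + 1) + 1) - 1) + 1) - 1), ((((((c - 1 - 1) + 1) - 1) + 1) + 1) + 1)) := t_zs h40 h41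
              have h43 : ¬((((((b + 1) + 1) - 1) + 1) - 1) + ((((((c - 1 - 1) + 1) - 1) + 1) + 1) + 1) = 0) := fun hh => h4 (by linear_combination (1 : ℂ) * hh + (-1 : ℂ) * h1 + (1 : ℂ) * h32)
              have h44 : (((((a + 1) - 1) - 1 - 1) + 1) - 1) + ((((((c - 1 - 1) + 1) - 1) + 1) + 1) + 1) = 0 := by linear_combination (1 : ℂ) * h2
              have e45 : t ((((((a + 1) - 1) - 1 - 1) + 1) - 1), (((((b + 1) + 1) - 1) + 1) - 1), ((((((c - 1 - 1) + 1) - 1) + 1) + 1) + 1)) = ((((((((c - 1 - 1) + 1) - 1) + 1) + 1) + 1) - 1), ((((((a + 1) - 1) - 1 - 1) + 1) - 1) + 1), (((((b + 1) + 1) - 1) + 1) - 1)) := t_sz h43 h44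
              have hfix : t^[10] (a, b, c) = (a, b, c) := by
                show t (t (t (t (t (t (t (t (t (t ((a, b, c))))))))))) = (a, b, c)
                rw [e3, e17, e24, e27, e30, e33, e36, e39, e42, e45]
                rw [Prod.mk.injEq, Prod.mk.injEq]
                exact ⟨by linear_combination (1 : ℂ) * h1 + (-1 : ℂ) * h32, by linear_combination (-1 : ℂ) * h1 + (1 : ℂ) * h2, by linear_combination (-1 : ℂ) * h2 + (1 : ℂ) * h32⟩
              rw [show (180 : ℕ) = 10 * 18 from rfl, Function.iterate_mul]
              exact Function.iterate_fixed hfix 18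
            · -- case false
              have e46 : t ((((b + 1) + 1) - 1), ((((c - 1 - 1) + 1) - 1) + 1), ((a + 1) - 1)) = ((((a + 1) - 1) - 1), (((b + 1) + 1) - 1), (((((c - 1 - 1) + 1) - 1) + 1) + 1)) := t_zs h31 h32
              by_cases h47 : (((b + 1) + 1) - 1) + (((((c - 1 - 1) + 1) - 1) + 1) + 1) = 0
              · exact absurd (show (1 : ℂ) = 0 by linear_combination (-1 : ℂ) * h1 + (1 : ℂ) * h47) one_ne_zero
              · -- case false
                have h48 : (((a + 1) - 1) - 1) + (((((c - 1 - 1) + 1) - 1) + 1) + 1) = 0 := by linear_combination (1 : ℂ) * h2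
                have e49 : t ((((a + 1) - 1) - 1), (((b + 1) + 1) - 1), (((((c - 1 - 1) + 1) - 1) + 1) + 1)) = (((((((c - 1 - 1) + 1) - 1) + 1) + 1) - 1), ((((a + 1) - 1) - 1) + 1), (((b + 1) + 1) - 1)) := t_sz h47 h48
                have h50 : ¬(((((a + 1) - 1) - 1) + 1) + (((b + 1) + 1) - 1) = 0) := fun hh => h19 (by linear_combination (1 : ℂ) * hh)
                have h51 : ((((((c - 1 - 1) + 1) - 1) + 1) + 1) - 1) + (((b + 1) + 1) - 1) = 0 := by linear_combination (1 : ℂ) * h1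
                have e52 : t (((((((c - 1 - 1) + 1) - 1) + 1) + 1) - 1), ((((a + 1) - 1) - 1) + 1), (((b + 1) + 1) - 1)) = (((((b + 1) + 1) - 1) - 1), (((((((c - 1 - 1) + 1) - 1) + 1) + 1) - 1) + 1), ((((a + 1) - 1) - 1) + 1)) := t_sz h50 h51
                have h53 : ¬((((((((c - 1 - 1) + 1) - 1) + 1) + 1) - 1) + 1) + ((((a + 1) - 1) - 1) + 1) = 0) := fun hh => h47 (by linear_combination (1 : ℂ) * hh + (1 : ℂ) * h1 + (-1 : ℂ) * h2)
                have h54 : ¬(((((b + 1) + 1) - 1) - 1) + ((((a + 1) - 1) - 1) + 1) = 0) := fun hh => h32 (by linear_combination (1 : ℂ) * hh)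
                have e55 : t (((((b + 1) + 1) - 1) - 1), (((((((c - 1 - 1) + 1) - 1) + 1) + 1) - 1) + 1), ((((a + 1) - 1) - 1) + 1)) = (((((a + 1) - 1) - 1) + 1), ((((b + 1) + 1) - 1) - 1), (((((((c - 1 - 1) + 1) - 1) + 1) + 1) - 1) + 1)) := t_ss h53 h54
                have hfix : t^[9] (a, b, c) = (a, b, c) := by
                  show t (t (t (t (t (t (t (t (t ((a, b, c)))))))))) = (a, b, c)
                  rw [e3, e17, e24, e27, e30, e46, e49, e52, e55]
                  rw [Prod.mk.injEq, Prod.mk.injEq]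
                  exact ⟨by linear_combination, by linear_combination, by linear_combination⟩
                rw [show (180 : ℕ) = 9 * 20 from rfl, Function.iterate_mul]
                exact Function.iterate_fixed hfix 20
    · -- case false
      have e56 : t (a, b, c) = ((c - 1), a, (b + 1)) := t_zs h1 h2
      by_cases h57 : a + (b + 1) = 0
      · -- case true
        by_cases h58 : (c - 1) + ((b + 1) - 1) = 0
        · exact absurd (show (1 : ℂ) = 0 by linear_combination (1 : ℂ) * h1 + (-1 : ℂ) * h58) one_ne_zero
        · -- case false
          have e59 : t ((c - 1), a, (b + 1)) = (((b + 1) - 1), (c - 1), (a + 1)) := t_zs h57 h58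
          by_cases h60 : (c - 1) + (a + 1) = 0
          · -- case true
            have h61 : ¬(((b + 1) - 1) + ((a + 1) - 1) = 0) := fun hh => h2 (by linear_combination (1 : ℂ) * hh + (-1 : ℂ) * h57 + (1 : ℂ) * h60)
            have e62 : t (((b + 1) - 1), (c - 1), (a + 1)) = (((a + 1) - 1), ((b + 1) - 1), ((c - 1) + 1)) := t_zs h60 h61
            have hfix : t^[3] (a, b, c) = (a, b, c) := by
              show t (t (t ((a, b, c)))) = (a, b, c)
              rw [e56, e59, e62]
              rw [Prod.mk.injEq, Prod.mk.injEq]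
              exact ⟨by linear_combination, by linear_combination, by linear_combination⟩
            rw [show (180 : ℕ) = 3 * 60 from rfl, Function.iterate_mul]
            exact Function.iterate_fixed hfix 60
          · -- case false
            have h63 : ((b + 1) - 1) + (a + 1) = 0 := by linear_combination (1 : ℂ) * h57
            have e64 : t (((b + 1) - 1), (c - 1), (a + 1)) = (((a + 1) - 1), (((b + 1) - 1) + 1), (c - 1)) := t_sz h60 h63
            have h65 : (((b + 1) - 1) + 1) + (c - 1) = 0 := by linear_combination (1 : ℂ) * h1
            by_cases h66 : ((a + 1) - 1) + ((c - 1) - 1) = 0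
            · -- case true
              have e67 : t (((a + 1) - 1), (((b + 1) - 1) + 1), (c - 1)) = (((c - 1) - 1 - 1), (((a + 1) - 1) + 1), ((((b + 1) - 1) + 1) + 1)) := t_zz h65 h66
              have h68 : ¬((((a + 1) - 1) + 1) + ((((b + 1) - 1) + 1) + 1) = 0) := fun hh => h60 (by linear_combination (1 : ℂ) * hh + (-1 : ℂ) * h57 + (1 : ℂ) * h66)
              have h69 : ¬(((c - 1) - 1 - 1) + ((((b + 1) - 1) + 1) + 1) = 0) := fun hh => h58 (by linear_combination (1 : ℂ) * hh)
              have e70 : t (((c - 1) - 1 - 1), (((a + 1) - 1) + 1), ((((b + 1) - 1) + 1) + 1)) = (((((b + 1) - 1) + 1) + 1), ((c - 1) - 1 - 1), (((a + 1) - 1) + 1)) := t_ss h68 h69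
              have hfix : t^[5] (a, b, c) = (a, b, c) := by
                show t (t (t (t (t ((a, b, c)))))) = (a, b, c)
                rw [e56, e59, e64, e67, e70]
                rw [Prod.mk.injEq, Prod.mk.injEq]
                exact ⟨by linear_combination (1 : ℂ) * h1 + (-1 : ℂ) * h66, by linear_combination (-1 : ℂ) * h57 + (1 : ℂ) * h66, by linear_combination (-1 : ℂ) * h1 + (1 : ℂ) * h57⟩
              rw [show (180 : ℕ) = 5 * 36 from rfl, Function.iterate_mul]
              exact Function.iterate_fixed hfix 36
            · -- case false
              have e71 : t (((a + 1) - 1), (((b + 1) - 1) + 1), (c - 1)) = (((c - 1) - 1), ((a + 1) - 1), ((((b + 1) - 1) + 1) + 1)) := t_zs h65 h66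
              by_cases h72 : ((a + 1) - 1) + ((((b + 1) - 1) + 1) + 1) = 0
              · exact absurd (show (1 : ℂ) = 0 by linear_combination (-1 : ℂ) * h57 + (1 : ℂ) * h72) one_ne_zero
              · -- case false
                have h73 : ((c - 1) - 1) + ((((b + 1) - 1) + 1) + 1) = 0 := by linear_combination (1 : ℂ) * h1
                have e74 : t (((c - 1) - 1), ((a + 1) - 1), ((((b + 1) - 1) + 1) + 1)) = ((((((b + 1) - 1) + 1) + 1) - 1), (((c - 1) - 1) + 1), ((a + 1) - 1)) := t_sz h72 h73
                have h75 : ¬((((c - 1) - 1) + 1) + ((a + 1) - 1) = 0) := fun hh => h2 (by linear_combination (1 : ℂ) * hh)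
                have h76 : (((((b + 1) - 1) + 1) + 1) - 1) + ((a + 1) - 1) = 0 := by linear_combination (1 : ℂ) * h57
                have e77 : t ((((((b + 1) - 1) + 1) + 1) - 1), (((c - 1) - 1) + 1), ((a + 1) - 1)) = ((((a + 1) - 1) - 1), ((((((b + 1) - 1) + 1) + 1) - 1) + 1), (((c - 1) - 1) + 1)) := t_sz h75 h76
                have h78 : ¬(((((((b + 1) - 1) + 1) + 1) - 1) + 1) + (((c - 1) - 1) + 1) = 0) := fun hh => h72 (by linear_combination (1 : ℂ) * hh + (-1 : ℂ) * h1 + (1 : ℂ) * h57)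
                have h79 : ¬((((a + 1) - 1) - 1) + (((c - 1) - 1) + 1) = 0) := fun hh => h66 (by linear_combination (1 : ℂ) * hh)
                have e80 : t ((((a + 1) - 1) - 1), ((((((b + 1) - 1) + 1) + 1) - 1) + 1), (((c - 1) - 1) + 1)) = ((((c - 1) - 1) + 1), (((a + 1) - 1) - 1), ((((((b + 1) - 1) + 1) + 1) - 1) + 1)) := t_ss h78 h79
                have h81 : (((a + 1) - 1) - 1) + ((((((b + 1) - 1) + 1) + 1) - 1) + 1) = 0 := by linear_combination (1 : ℂ) * h57
                have h82 : (((c - 1) - 1) + 1) + (((((((b + 1) - 1) + 1) + 1) - 1) + 1) - 1) = 0 := by linear_combination (1 : ℂ) * h1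
                have e83 : t ((((c - 1) - 1) + 1), (((a + 1) - 1) - 1), ((((((b + 1) - 1) + 1) + 1) - 1) + 1)) = ((((((((b + 1) - 1) + 1) + 1) - 1) + 1) - 1 - 1), ((((c - 1) - 1) + 1) + 1), ((((a + 1) - 1) - 1) + 1)) := t_zz h81 h82
                have h84 : ¬(((((c - 1) - 1) + 1) + 1) + ((((a + 1) - 1) - 1) + 1) = 0) := fun hh => h60 (by linear_combination (1 : ℂ) * hh)
                have h85 : ¬((((((((b + 1) - 1) + 1) + 1) - 1) + 1) - 1 - 1) + ((((a + 1) - 1) - 1) + 1) = 0) := fun hh => h58 (by linear_combination (1 : ℂ) * hh + (1 : ℂ) * h1 + (-1 : ℂ) * h57)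
                have e86 : t ((((((((b + 1) - 1) + 1) + 1) - 1) + 1) - 1 - 1), ((((c - 1) - 1) + 1) + 1), ((((a + 1) - 1) - 1) + 1)) = (((((a + 1) - 1) - 1) + 1), (((((((b + 1) - 1) + 1) + 1) - 1) + 1) - 1 - 1), ((((c - 1) - 1) + 1) + 1)) := t_ss h84 h85
                have hfix : t^[9] (a, b, c) = (a, b, c) := by
                  show t (t (t (t (t (t (t (t (t ((a, b, c)))))))))) = (a, b, c)
                  rw [e56, e59, e64, e71, e74, e77, e80, e83, e86]
                  rw [Prod.mk.injEq, Prod.mk.injEq]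
                  exact ⟨by linear_combination, by linear_combination, by linear_combination⟩
                rw [show (180 : ℕ) = 9 * 20 from rfl, Function.iterate_mul]
                exact Function.iterate_fixed hfix 20
      · -- case false
        have h87 : (c - 1) + (b + 1) = 0 := by linear_combination (1 : ℂ) * h1
        have e88 : t ((c - 1), a, (b + 1)) = (((b + 1) - 1), ((c - 1) + 1), a) := t_sz h57 h87
        by_cases h89 : ((c - 1) + 1) + a = 0
        · -- case true
          by_cases h90 : ((b + 1) - 1) + (a - 1) = 0
          · -- case true
            have e91 : t (((b + 1) - 1), ((c - 1) + 1), a) = ((a - 1 - 1), (((b + 1) - 1) + 1), (((c - 1) + 1) + 1)) := t_zz h89 h90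
            have h92 : ¬((((b + 1) - 1) + 1) + (((c - 1) + 1) + 1) = 0) := fun hh => h57 (by linear_combination (1 : ℂ) * hh + (-1 : ℂ) * h1 + (1 : ℂ) * h90)
            have h93 : ¬((a - 1 - 1) + (((c - 1) + 1) + 1) = 0) := fun hh => h2 (by linear_combination (1 : ℂ) * hh)
            have e94 : t ((a - 1 - 1), (((b + 1) - 1) + 1), (((c - 1) + 1) + 1)) = ((((c - 1) + 1) + 1), (a - 1 - 1), (((b + 1) - 1) + 1)) := t_ss h92 h93
            have h95 : (a - 1 - 1) + (((b + 1) - 1) + 1) = 0 := by linear_combination (1 : ℂ) * h90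
            by_cases h96 : (((c - 1) + 1) + 1) + ((((b + 1) - 1) + 1) - 1) = 0
            · exact absurd (show (1 : ℂ) = 0 by linear_combination (-1 : ℂ) * h1 + (1 : ℂ) * h96) one_ne_zero
            · -- case false
              have e97 : t ((((c - 1) + 1) + 1), (a - 1 - 1), (((b + 1) - 1) + 1)) = (((((b + 1) - 1) + 1) - 1), (((c - 1) + 1) + 1), ((a - 1 - 1) + 1)) := t_zs h95 h96
              have hfix : t^[5] (a, b, c) = (a, b, c) := by
                show t (t (t (t (t ((a, b, c)))))) = (a, b, c)
                rw [e56, e88, e91, e94, e97]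
                rw [Prod.mk.injEq, Prod.mk.injEq]
                exact ⟨by linear_combination (1 : ℂ) * h1 + (-1 : ℂ) * h89, by linear_combination (1 : ℂ) * h89 + (-1 : ℂ) * h90, by linear_combination (-1 : ℂ) * h1 + (1 : ℂ) * h90⟩
              rw [show (180 : ℕ) = 5 * 36 from rfl, Function.iterate_mul]
              exact Function.iterate_fixed hfix 36
          · -- case false
            have e98 : t (((b + 1) - 1), ((c - 1) + 1), a) = ((a - 1), ((b + 1) - 1), (((c - 1) + 1) + 1)) := t_zs h89 h90
            by_cases h99 : ((b + 1) - 1) + (((c - 1) + 1) + 1) = 0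
            · exact absurd (show (1 : ℂ) = 0 by linear_combination (-1 : ℂ) * h1 + (1 : ℂ) * h99) one_ne_zero
            · -- case false
              have h100 : (a - 1) + (((c - 1) + 1) + 1) = 0 := by linear_combination (1 : ℂ) * h89
              have e101 : t ((a - 1), ((b + 1) - 1), (((c - 1) + 1) + 1)) = (((((c - 1) + 1) + 1) - 1), ((a - 1) + 1), ((b + 1) - 1)) := t_sz h99 h100
              by_cases h102 : ((a - 1) + 1) + ((b + 1) - 1) = 0
              · -- case true
                have h103 : ¬(((((c - 1) + 1) + 1) - 1) + (((b + 1) - 1) - 1) = 0) := fun hh => h2 (by linear_combination (1 : ℂ) * hh + (-1 : ℂ) * h1 + (1 : ℂ) * h89)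
                have e104 : t (((((c - 1) + 1) + 1) - 1), ((a - 1) + 1), ((b + 1) - 1)) = ((((b + 1) - 1) - 1), ((((c - 1) + 1) + 1) - 1), (((a - 1) + 1) + 1)) := t_zs h102 h103
                have h105 : ¬(((((c - 1) + 1) + 1) - 1) + (((a - 1) + 1) + 1) = 0) := fun hh => h57 (by linear_combination (1 : ℂ) * hh + (-1 : ℂ) * h89 + (1 : ℂ) * h102)
                have h106 : (((b + 1) - 1) - 1) + (((a - 1) + 1) + 1) = 0 := by linear_combination (1 : ℂ) * h102
                have e107 : t ((((b + 1) - 1) - 1), ((((c - 1) + 1) + 1) - 1), (((a - 1) + 1) + 1)) = (((((a - 1) + 1) + 1) - 1), ((((b + 1) - 1) - 1) + 1), ((((c - 1) + 1) + 1) - 1)) := t_sz h105 h106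
                have hfix : t^[6] (a, b, c) = (a, b, c) := by
                  show t (t (t (t (t (t ((a, b, c))))))) = (a, b, c)
                  rw [e56, e88, e98, e101, e104, e107]
                  rw [Prod.mk.injEq, Prod.mk.injEq]
                  exact ⟨by linear_combination, by linear_combination, by linear_combination⟩
                rw [show (180 : ℕ) = 6 * 30 from rfl, Function.iterate_mul]
                exact Function.iterate_fixed hfix 30
              · -- case false
                have h108 : ((((c - 1) + 1) + 1) - 1) + ((b + 1) - 1) = 0 := by linear_combination (1 : ℂ) * h1
                have e109 : t (((((c - 1) + 1) + 1) - 1), ((a - 1) + 1), ((b + 1) - 1)) = ((((b + 1) - 1) - 1), (((((c - 1) + 1) + 1) - 1) + 1), ((a - 1) + 1)) := t_sz h102 h108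
                have h110 : ¬((((((c - 1) + 1) + 1) - 1) + 1) + ((a - 1) + 1) = 0) := fun hh => h99 (by linear_combination (1 : ℂ) * hh + (1 : ℂ) * h1 + (-1 : ℂ) * h89)
                have h111 : ¬((((b + 1) - 1) - 1) + ((a - 1) + 1) = 0) := fun hh => h90 (by linear_combination (1 : ℂ) * hh)
                have e112 : t ((((b + 1) - 1) - 1), (((((c - 1) + 1) + 1) - 1) + 1), ((a - 1) + 1)) = (((a - 1) + 1), (((b + 1) - 1) - 1), (((((c - 1) + 1) + 1) - 1) + 1)) := t_ss h110 h111
                have h113 : (((b + 1) - 1) - 1) + (((((c - 1) + 1) + 1) - 1) + 1) = 0 := by linear_combination (1 : ℂ) * h1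
                have h114 : ((a - 1) + 1) + ((((((c - 1) + 1) + 1) - 1) + 1) - 1) = 0 := by linear_combination (1 : ℂ) * h89
                have e115 : t (((a - 1) + 1), (((b + 1) - 1) - 1), (((((c - 1) + 1) + 1) - 1) + 1)) = (((((((c - 1) + 1) + 1) - 1) + 1) - 1 - 1), (((a - 1) + 1) + 1), ((((b + 1) - 1) - 1) + 1)) := t_zz h113 h114
                have h116 : ¬((((a - 1) + 1) + 1) + ((((b + 1) - 1) - 1) + 1) = 0) := fun hh => h57 (by linear_combination (1 : ℂ) * hh)
                have h117 : ¬(((((((c - 1) + 1) + 1) - 1) + 1) - 1 - 1) + ((((b + 1) - 1) - 1) + 1) = 0) := fun hh => h2 (by linear_combination (1 : ℂ) * hh + (-1 : ℂ) * h1 + (1 : ℂ) * h89)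
                have e118 : t (((((((c - 1) + 1) + 1) - 1) + 1) - 1 - 1), (((a - 1) + 1) + 1), ((((b + 1) - 1) - 1) + 1)) = (((((b + 1) - 1) - 1) + 1), ((((((c - 1) + 1) + 1) - 1) + 1) - 1 - 1), (((a - 1) + 1) + 1)) := t_ss h116 h117
                have h119 : ((((((c - 1) + 1) + 1) - 1) + 1) - 1 - 1) + (((a - 1) + 1) + 1) = 0 := by linear_combination (1 : ℂ) * h89
                have h120 : ¬(((((b + 1) - 1) - 1) + 1) + ((((a - 1) + 1) + 1) - 1) = 0) := fun hh => h102 (by linear_combination (1 : ℂ) * hh)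
                have e121 : t (((((b + 1) - 1) - 1) + 1), ((((((c - 1) + 1) + 1) - 1) + 1) - 1 - 1), (((a - 1) + 1) + 1)) = (((((a - 1) + 1) + 1) - 1), ((((b + 1) - 1) - 1) + 1), (((((((c - 1) + 1) + 1) - 1) + 1) - 1 - 1) + 1)) := t_zs h119 h120
                have hfix : t^[9] (a, b, c) = (a, b, c) := by
                  show t (t (t (t (t (t (t (t (t ((a, b, c)))))))))) = (a, b, c)
                  rw [e56, e88, e98, e101, e109, e112, e115, e118, e121]
                  rw [Prod.mk.injEq, Prod.mk.injEq]
                  exact ⟨by linear_combination, by linear_combination, by linear_combination⟩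
                rw [show (180 : ℕ) = 9 * 20 from rfl, Function.iterate_mul]
                exact Function.iterate_fixed hfix 20
        · -- case false
          by_cases h122 : ((b + 1) - 1) + a = 0
          · -- case true
            have e123 : t (((b + 1) - 1), ((c - 1) + 1), a) = ((a - 1), (((b + 1) - 1) + 1), ((c - 1) + 1)) := t_sz h89 h122
            have h124 : ¬((((b + 1) - 1) + 1) + ((c - 1) + 1) = 0) := fun hh => h57 (by linear_combination (1 : ℂ) * hh + (-1 : ℂ) * h1 + (1 : ℂ) * h122)
            have h125 : ¬((a - 1) + ((c - 1) + 1) = 0) := fun hh => h2 (by linear_combination (1 : ℂ) * hh)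
            have e126 : t ((a - 1), (((b + 1) - 1) + 1), ((c - 1) + 1)) = (((c - 1) + 1), (a - 1), (((b + 1) - 1) + 1)) := t_ss h124 h125
            have h127 : (a - 1) + (((b + 1) - 1) + 1) = 0 := by linear_combination (1 : ℂ) * h122
            have h128 : ((c - 1) + 1) + ((((b + 1) - 1) + 1) - 1) = 0 := by linear_combination (1 : ℂ) * h1
            have e129 : t (((c - 1) + 1), (a - 1), (((b + 1) - 1) + 1)) = (((((b + 1) - 1) + 1) - 1 - 1), (((c - 1) + 1) + 1), ((a - 1) + 1)) := t_zz h127 h128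
            by_cases h130 : (((c - 1) + 1) + 1) + ((a - 1) + 1) = 0
            · -- case true
              have h131 : ¬(((((b + 1) - 1) + 1) - 1 - 1) + (((a - 1) + 1) - 1) = 0) := fun hh => h2 (by linear_combination (1 : ℂ) * hh + (-1 : ℂ) * h122 + (1 : ℂ) * h130)
              have e132 : t (((((b + 1) - 1) + 1) - 1 - 1), (((c - 1) + 1) + 1), ((a - 1) + 1)) = ((((a - 1) + 1) - 1), ((((b + 1) - 1) + 1) - 1 - 1), ((((c - 1) + 1) + 1) + 1)) := t_zs h130 h131
              have h133 : ¬(((((b + 1) - 1) + 1) - 1 - 1) + ((((c - 1) + 1) + 1) + 1) = 0) := fun hh => h57 (by linear_combination (1 : ℂ) * hh + (-1 : ℂ) * h1 + (1 : ℂ) * h122)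
              have h134 : (((a - 1) + 1) - 1) + ((((c - 1) + 1) + 1) + 1) = 0 := by linear_combination (1 : ℂ) * h130
              have e135 : t ((((a - 1) + 1) - 1), ((((b + 1) - 1) + 1) - 1 - 1), ((((c - 1) + 1) + 1) + 1)) = ((((((c - 1) + 1) + 1) + 1) - 1), ((((a - 1) + 1) - 1) + 1), ((((b + 1) - 1) + 1) - 1 - 1)) := t_sz h133 h134
              have h136 : ¬(((((a - 1) + 1) - 1) + 1) + ((((b + 1) - 1) + 1) - 1 - 1) = 0) := fun hh => h89 (by linear_combination (1 : ℂ) * hh + (-1 : ℂ) * h122 + (1 : ℂ) * h130)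
              have h137 : (((((c - 1) + 1) + 1) + 1) - 1) + ((((b + 1) - 1) + 1) - 1 - 1) = 0 := by linear_combination (1 : ℂ) * h1
              have e138 : t ((((((c - 1) + 1) + 1) + 1) - 1), ((((a - 1) + 1) - 1) + 1), ((((b + 1) - 1) + 1) - 1 - 1)) = ((((((b + 1) - 1) + 1) - 1 - 1) - 1), ((((((c - 1) + 1) + 1) + 1) - 1) + 1), ((((a - 1) + 1) - 1) + 1)) := t_sz h136 h137
              have h139 : ¬(((((((c - 1) + 1) + 1) + 1) - 1) + 1) + ((((a - 1) + 1) - 1) + 1) = 0) := fun hh => h57 (by linear_combination (1 : ℂ) * hh + (1 : ℂ) * h122 + (-1 : ℂ) * h130)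
              have h140 : ¬((((((b + 1) - 1) + 1) - 1 - 1) - 1) + ((((a - 1) + 1) - 1) + 1) = 0) := fun hh => h2 (by linear_combination (1 : ℂ) * hh + (-1 : ℂ) * h122 + (1 : ℂ) * h130)
              have e141 : t ((((((b + 1) - 1) + 1) - 1 - 1) - 1), ((((((c - 1) + 1) + 1) + 1) - 1) + 1), ((((a - 1) + 1) - 1) + 1)) = (((((a - 1) + 1) - 1) + 1), (((((b + 1) - 1) + 1) - 1 - 1) - 1), ((((((c - 1) + 1) + 1) + 1) - 1) + 1)) := t_ss h139 h140
              have h142 : (((((b + 1) - 1) + 1) - 1 - 1) - 1) + ((((((c - 1) + 1) + 1) + 1) - 1) + 1) = 0 := by linear_combination (1 : ℂ) * h1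
              have h143 : ((((a - 1) + 1) - 1) + 1) + (((((((c - 1) + 1) + 1) + 1) - 1) + 1) - 1) = 0 := by linear_combination (1 : ℂ) * h130
              have e144 : t (((((a - 1) + 1) - 1) + 1), (((((b + 1) - 1) + 1) - 1 - 1) - 1), ((((((c - 1) + 1) + 1) + 1) - 1) + 1)) = ((((((((c - 1) + 1) + 1) + 1) - 1) + 1) - 1 - 1), (((((a - 1) + 1) - 1) + 1) + 1), ((((((b + 1) - 1) + 1) - 1 - 1) - 1) + 1)) := t_zz h142 h143
              have hfix : t^[10] (a, b, c) = (a, b, c) := by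
                show t (t (t (t (t (t (t (t (t (t ((a, b, c))))))))))) = (a, b, c)
                rw [e56, e88, e123, e126, e129, e132, e135, e138, e141, e144]
                rw [Prod.mk.injEq, Prod.mk.injEq]
                exact ⟨by linear_combination (1 : ℂ) * h1 + (-1 : ℂ) * h122, by linear_combination (-1 : ℂ) * h1 + (1 : ℂ) * h130, by linear_combination (1 : ℂ) * h122 + (-1 : ℂ) * h130⟩
              rw [show (180 : ℕ) = 10 * 18 from rfl, Function.iterate_mul]
              exact Function.iterate_fixed hfix 18
            · -- case false
              by_cases h145 : ((((b + 1) - 1) + 1) - 1 - 1) + ((a - 1) + 1) = 0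
              · exact absurd (show (1 : ℂ) = 0 by linear_combination (1 : ℂ) * h122 + (-1 : ℂ) * h145) one_ne_zero
              · -- case false
                have e146 : t (((((b + 1) - 1) + 1) - 1 - 1), (((c - 1) + 1) + 1), ((a - 1) + 1)) = (((a - 1) + 1), ((((b + 1) - 1) + 1) - 1 - 1), (((c - 1) + 1) + 1)) := t_ss h130 h145
                have h147 : ((((b + 1) - 1) + 1) - 1 - 1) + (((c - 1) + 1) + 1) = 0 := by linear_combination (1 : ℂ) * h1
                have h148 : ¬(((a - 1) + 1) + ((((c - 1) + 1) + 1) - 1) = 0) := fun hh => h89 (by linear_combination (1 : ℂ) * hh)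
                have e149 : t (((a - 1) + 1), ((((b + 1) - 1) + 1) - 1 - 1), (((c - 1) + 1) + 1)) = (((((c - 1) + 1) + 1) - 1), ((a - 1) + 1), (((((b + 1) - 1) + 1) - 1 - 1) + 1)) := t_zs h147 h148
                have h150 : ((a - 1) + 1) + (((((b + 1) - 1) + 1) - 1 - 1) + 1) = 0 := by linear_combination (1 : ℂ) * h122
                have h151 : ¬(((((c - 1) + 1) + 1) - 1) + ((((((b + 1) - 1) + 1) - 1 - 1) + 1) - 1) = 0) := fun hh => h145 (by linear_combination (1 : ℂ) * hh + (-1 : ℂ) * h1 + (1 : ℂ) * h122)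
                have e152 : t (((((c - 1) + 1) + 1) - 1), ((a - 1) + 1), (((((b + 1) - 1) + 1) - 1 - 1) + 1)) = (((((((b + 1) - 1) + 1) - 1 - 1) + 1) - 1), ((((c - 1) + 1) + 1) - 1), (((a - 1) + 1) + 1)) := t_zs h150 h151
                have h153 : ¬(((((c - 1) + 1) + 1) - 1) + (((a - 1) + 1) + 1) = 0) := fun hh => h130 (by linear_combination (1 : ℂ) * hh)
                have h154 : ((((((b + 1) - 1) + 1) - 1 - 1) + 1) - 1) + (((a - 1) + 1) + 1) = 0 := by linear_combination (1 : ℂ) * h122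
                have e155 : t (((((((b + 1) - 1) + 1) - 1 - 1) + 1) - 1), ((((c - 1) + 1) + 1) - 1), (((a - 1) + 1) + 1)) = (((((a - 1) + 1) + 1) - 1), (((((((b + 1) - 1) + 1) - 1 - 1) + 1) - 1) + 1), ((((c - 1) + 1) + 1) - 1)) := t_sz h153 h154
                have hfix : t^[9] (a, b, c) = (a, b, c) := by
                  show t (t (t (t (t (t (t (t (t ((a, b, c)))))))))) = (a, b, c)
                  rw [e56, e88, e123, e126, e129, e146, e149, e152, e155]
                  rw [Prod.mk.injEq, Prod.mk.injEq]
                  exact ⟨by linear_combination, by linear_combination, by linear_combination⟩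
                rw [show (180 : ℕ) = 9 * 20 from rfl, Function.iterate_mul]
                exact Function.iterate_fixed hfix 20
          · -- case false
            have e156 : t (((b + 1) - 1), ((c - 1) + 1), a) = (a, ((b + 1) - 1), ((c - 1) + 1)) := t_ss h89 h122
            have hfix : t^[3] (a, b, c) = (a, b, c) := by
              show t (t (t ((a, b, c)))) = (a, b, c)
              rw [e56, e88, e156]
              rw [Prod.mk.injEq, Prod.mk.injEq]
              exact ⟨by linear_combination, by linear_combination, by linear_combination⟩
            rw [show (180 : ℕ) = 3 * 60 from rfl, Function.iterate_mul]
            exact Function.iterate_fixed hfix 60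
  · -- case false
    by_cases h157 : a + c = 0
    · -- case true
      have e158 : t (a, b, c) = ((c - 1), (a + 1), b) := t_sz h1 h157
      by_cases h159 : (a + 1) + b = 0
      · -- case true
        by_cases h160 : (c - 1) + (b - 1) = 0
        · -- case true
          have e161 : t ((c - 1), (a + 1), b) = ((b - 1 - 1), ((c - 1) + 1), ((a + 1) + 1)) := t_zz h159 h160
          have h162 : ¬(((c - 1) + 1) + ((a + 1) + 1) = 0) := fun hh => h1 (by linear_combination (1 : ℂ) * hh + (-1 : ℂ) * h157 + (1 : ℂ) * h160)
          by_cases h163 : (b - 1 - 1) + ((a + 1) + 1) = 0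
          · exact absurd (show (1 : ℂ) = 0 by linear_combination (1 : ℂ) * h159 + (-1 : ℂ) * h163) one_ne_zero
          · -- case false
            have e164 : t ((b - 1 - 1), ((c - 1) + 1), ((a + 1) + 1)) = (((a + 1) + 1), (b - 1 - 1), ((c - 1) + 1)) := t_ss h162 h163
            have h165 : (b - 1 - 1) + ((c - 1) + 1) = 0 := by linear_combination (1 : ℂ) * h160
            by_cases h166 : ((a + 1) + 1) + (((c - 1) + 1) - 1) = 0
            · exact absurd (show (1 : ℂ) = 0 by linear_combination (-1 : ℂ) * h157 + (1 : ℂ) * h166) one_ne_zero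
            · -- case false
              have e167 : t (((a + 1) + 1), (b - 1 - 1), ((c - 1) + 1)) = ((((c - 1) + 1) - 1), ((a + 1) + 1), ((b - 1 - 1) + 1)) := t_zs h165 h166
              have h168 : ((a + 1) + 1) + ((b - 1 - 1) + 1) = 0 := by linear_combination (1 : ℂ) * h159
              have h169 : ¬((((c - 1) + 1) - 1) + (((b - 1 - 1) + 1) - 1) = 0) := fun hh => h163 (by linear_combination (1 : ℂ) * hh + (1 : ℂ) * h159 + (-1 : ℂ) * h160)
              have e170 : t ((((c - 1) + 1) - 1), ((a + 1) + 1), ((b - 1 - 1) + 1)) = ((((b - 1 - 1) + 1) - 1), (((c - 1) + 1) - 1), (((a + 1) + 1) + 1)) := t_zs h168 h169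
              have hfix : t^[5] (a, b, c) = (a, b, c) := by
                show t (t (t (t (t ((a, b, c)))))) = (a, b, c)
                rw [e158, e161, e164, e167, e170]
                rw [Prod.mk.injEq, Prod.mk.injEq]
                exact ⟨by linear_combination (-1 : ℂ) * h157 + (1 : ℂ) * h160, by linear_combination (1 : ℂ) * h157 + (-1 : ℂ) * h159, by linear_combination (1 : ℂ) * h159 + (-1 : ℂ) * h160⟩
              rw [show (180 : ℕ) = 5 * 36 from rfl, Function.iterate_mul]
              exact Function.iterate_fixed hfix 36
        · -- case false
          have e171 : t ((c - 1), (a + 1), b) = ((b - 1), (c - 1), ((a + 1) + 1)) := t_zs h159 h160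
          by_cases h172 : (c - 1) + ((a + 1) + 1) = 0
          · exact absurd (show (1 : ℂ) = 0 by linear_combination (-1 : ℂ) * h157 + (1 : ℂ) * h172) one_ne_zero
          · -- case false
            have h173 : (b - 1) + ((a + 1) + 1) = 0 := by linear_combination (1 : ℂ) * h159
            have e174 : t ((b - 1), (c - 1), ((a + 1) + 1)) = ((((a + 1) + 1) - 1), ((b - 1) + 1), (c - 1)) := t_sz h172 h173
            by_cases h175 : ((b - 1) + 1) + (c - 1) = 0
            · -- case true
              have h176 : ¬((((a + 1) + 1) - 1) + ((c - 1) - 1) = 0) := fun hh => h160 (by linear_combination (1 : ℂ) * hh + (-1 : ℂ) * h157 + (1 : ℂ) * h175)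
              have e177 : t ((((a + 1) + 1) - 1), ((b - 1) + 1), (c - 1)) = (((c - 1) - 1), (((a + 1) + 1) - 1), (((b - 1) + 1) + 1)) := t_zs h175 h176
              have hfix : t^[4] (a, b, c) = (a, b, c) := by
                show t (t (t (t ((a, b, c))))) = (a, b, c)
                rw [e158, e171, e174, e177]
                rw [Prod.mk.injEq, Prod.mk.injEq]
                exact ⟨by linear_combination (-1 : ℂ) * h159 + (1 : ℂ) * h175, by linear_combination (1 : ℂ) * h157 + (-1 : ℂ) * h175, by linear_combination (-1 : ℂ) * h157 + (1 : ℂ) * h159⟩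
              rw [show (180 : ℕ) = 4 * 45 from rfl, Function.iterate_mul]
              exact Function.iterate_fixed hfix 45
            · -- case false
              have h178 : (((a + 1) + 1) - 1) + (c - 1) = 0 := by linear_combination (1 : ℂ) * h157
              have e179 : t ((((a + 1) + 1) - 1), ((b - 1) + 1), (c - 1)) = (((c - 1) - 1), ((((a + 1) + 1) - 1) + 1), ((b - 1) + 1)) := t_sz h175 h178
              have h180 : ¬(((((a + 1) + 1) - 1) + 1) + ((b - 1) + 1) = 0) := fun hh => h172 (by linear_combination (1 : ℂ) * hh + (1 : ℂ) * h157 + (-1 : ℂ) * h159)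
              have h181 : ¬(((c - 1) - 1) + ((b - 1) + 1) = 0) := fun hh => h160 (by linear_combination (1 : ℂ) * hh)
              have e182 : t (((c - 1) - 1), ((((a + 1) + 1) - 1) + 1), ((b - 1) + 1)) = (((b - 1) + 1), ((c - 1) - 1), ((((a + 1) + 1) - 1) + 1)) := t_ss h180 h181
              have h183 : ((c - 1) - 1) + ((((a + 1) + 1) - 1) + 1) = 0 := by linear_combination (1 : ℂ) * h157
              have h184 : ((b - 1) + 1) + (((((a + 1) + 1) - 1) + 1) - 1) = 0 := by linear_combination (1 : ℂ) * h159
              have e185 : t (((b - 1) + 1), ((c - 1) - 1), ((((a + 1) + 1) - 1) + 1)) = ((((((a + 1) + 1) - 1) + 1) - 1 - 1), (((b - 1) + 1) + 1), (((c - 1) - 1) + 1)) := t_zz h183 h184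
              have h186 : ¬((((b - 1) + 1) + 1) + (((c - 1) - 1) + 1) = 0) := fun hh => h1 (by linear_combination (1 : ℂ) * hh)
              by_cases h187 : (((((a + 1) + 1) - 1) + 1) - 1 - 1) + (((c - 1) - 1) + 1) = 0
              · exact absurd (show (1 : ℂ) = 0 by linear_combination (1 : ℂ) * h157 + (-1 : ℂ) * h187) one_ne_zero
              · -- case false
                have e188 : t ((((((a + 1) + 1) - 1) + 1) - 1 - 1), (((b - 1) + 1) + 1), (((c - 1) - 1) + 1)) = ((((c - 1) - 1) + 1), (((((a + 1) + 1) - 1) + 1) - 1 - 1), (((b - 1) + 1) + 1)) := t_ss h186 h187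
                have h189 : (((((a + 1) + 1) - 1) + 1) - 1 - 1) + (((b - 1) + 1) + 1) = 0 := by linear_combination (1 : ℂ) * h159
                have h190 : ¬((((c - 1) - 1) + 1) + ((((b - 1) + 1) + 1) - 1) = 0) := fun hh => h175 (by linear_combination (1 : ℂ) * hh)
                have e191 : t ((((c - 1) - 1) + 1), (((((a + 1) + 1) - 1) + 1) - 1 - 1), (((b - 1) + 1) + 1)) = (((((b - 1) + 1) + 1) - 1), (((c - 1) - 1) + 1), ((((((a + 1) + 1) - 1) + 1) - 1 - 1) + 1)) := t_zs h189 h190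
                have h192 : (((c - 1) - 1) + 1) + ((((((a + 1) + 1) - 1) + 1) - 1 - 1) + 1) = 0 := by linear_combination (1 : ℂ) * h157
                have h193 : ¬(((((b - 1) + 1) + 1) - 1) + (((((((a + 1) + 1) - 1) + 1) - 1 - 1) + 1) - 1) = 0) := fun hh => h187 (by linear_combination (1 : ℂ) * hh + (1 : ℂ) * h157 + (-1 : ℂ) * h159)
                have e194 : t (((((b - 1) + 1) + 1) - 1), (((c - 1) - 1) + 1), ((((((a + 1) + 1) - 1) + 1) - 1 - 1) + 1)) = ((((((((a + 1) + 1) - 1) + 1) - 1 - 1) + 1) - 1), ((((b - 1) + 1) + 1) - 1), ((((c - 1) - 1) + 1) + 1)) := t_zs h192 h193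
                have hfix : t^[9] (a, b, c) = (a, b, c) := by
                  show t (t (t (t (t (t (t (t (t ((a, b, c)))))))))) = (a, b, c)
                  rw [e158, e171, e174, e179, e182, e185, e188, e191, e194]
                  rw [Prod.mk.injEq, Prod.mk.injEq]
                  exact ⟨by linear_combination, by linear_combination, by linear_combination⟩
                rw [show (180 : ℕ) = 9 * 20 from rfl, Function.iterate_mul]
                exact Function.iterate_fixed hfix 20
      · -- case false
        by_cases h195 : (c - 1) + b = 0
        · -- case true
          have e196 : t ((c - 1), (a + 1), b) = ((b - 1), ((c - 1) + 1), (a + 1)) := t_sz h159 h195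
          have h197 : ¬(((c - 1) + 1) + (a + 1) = 0) := fun hh => h1 (by linear_combination (1 : ℂ) * hh + (-1 : ℂ) * h157 + (1 : ℂ) * h195)
          by_cases h198 : (b - 1) + (a + 1) = 0
          · -- case true
            have e199 : t ((b - 1), ((c - 1) + 1), (a + 1)) = (((a + 1) - 1), ((b - 1) + 1), ((c - 1) + 1)) := t_sz h197 h198
            have hfix : t^[3] (a, b, c) = (a, b, c) := by
              show t (t (t ((a, b, c)))) = (a, b, c)
              rw [e158, e196, e199]
              rw [Prod.mk.injEq, Prod.mk.injEq]
              exact ⟨by linear_combination, by linear_combination, by linear_combination⟩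
            rw [show (180 : ℕ) = 3 * 60 from rfl, Function.iterate_mul]
            exact Function.iterate_fixed hfix 60
          · -- case false
            have e200 : t ((b - 1), ((c - 1) + 1), (a + 1)) = ((a + 1), (b - 1), ((c - 1) + 1)) := t_ss h197 h198
            have h201 : (b - 1) + ((c - 1) + 1) = 0 := by linear_combination (1 : ℂ) * h195
            have h202 : (a + 1) + (((c - 1) + 1) - 1) = 0 := by linear_combination (1 : ℂ) * h157
            have e203 : t ((a + 1), (b - 1), ((c - 1) + 1)) = ((((c - 1) + 1) - 1 - 1), ((a + 1) + 1), ((b - 1) + 1)) := t_zz h201 h202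
            by_cases h204 : ((a + 1) + 1) + ((b - 1) + 1) = 0
            · -- case true
              have h205 : ¬((((c - 1) + 1) - 1 - 1) + (((b - 1) + 1) - 1) = 0) := fun hh => h198 (by linear_combination (1 : ℂ) * hh + (-1 : ℂ) * h195 + (1 : ℂ) * h204)
              have e206 : t ((((c - 1) + 1) - 1 - 1), ((a + 1) + 1), ((b - 1) + 1)) = ((((b - 1) + 1) - 1), (((c - 1) + 1) - 1 - 1), (((a + 1) + 1) + 1)) := t_zs h204 h205
              have hfix : t^[5] (a, b, c) = (a, b, c) := by
                show t (t (t (t (t ((a, b, c)))))) = (a, b, c)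
                rw [e158, e196, e200, e203, e206]
                rw [Prod.mk.injEq, Prod.mk.injEq]
                exact ⟨by linear_combination (-1 : ℂ) * h157 + (1 : ℂ) * h195, by linear_combination (1 : ℂ) * h157 + (-1 : ℂ) * h204, by linear_combination (-1 : ℂ) * h195 + (1 : ℂ) * h204⟩
              rw [show (180 : ℕ) = 5 * 36 from rfl, Function.iterate_mul]
              exact Function.iterate_fixed hfix 36
            · -- case false
              by_cases h207 : (((c - 1) + 1) - 1 - 1) + ((b - 1) + 1) = 0
              · exact absurd (show (1 : ℂ) = 0 by linear_combination (1 : ℂ) * h195 + (-1 : ℂ) * h207) one_ne_zero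
              · -- case false
                have e208 : t ((((c - 1) + 1) - 1 - 1), ((a + 1) + 1), ((b - 1) + 1)) = (((b - 1) + 1), (((c - 1) + 1) - 1 - 1), ((a + 1) + 1)) := t_ss h204 h207
                have h209 : (((c - 1) + 1) - 1 - 1) + ((a + 1) + 1) = 0 := by linear_combination (1 : ℂ) * h157
                have h210 : ¬(((b - 1) + 1) + (((a + 1) + 1) - 1) = 0) := fun hh => h159 (by linear_combination (1 : ℂ) * hh)
                have e211 : t (((b - 1) + 1), (((c - 1) + 1) - 1 - 1), ((a + 1) + 1)) = ((((a + 1) + 1) - 1), ((b - 1) + 1), ((((c - 1) + 1) - 1 - 1) + 1)) := t_zs h209 h210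
                have h212 : ((b - 1) + 1) + ((((c - 1) + 1) - 1 - 1) + 1) = 0 := by linear_combination (1 : ℂ) * h195
                have h213 : ¬((((a + 1) + 1) - 1) + (((((c - 1) + 1) - 1 - 1) + 1) - 1) = 0) := fun hh => h207 (by linear_combination (1 : ℂ) * hh + (-1 : ℂ) * h157 + (1 : ℂ) * h195)
                have e214 : t ((((a + 1) + 1) - 1), ((b - 1) + 1), ((((c - 1) + 1) - 1 - 1) + 1)) = ((((((c - 1) + 1) - 1 - 1) + 1) - 1), (((a + 1) + 1) - 1), (((b - 1) + 1) + 1)) := t_zs h212 h213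
                have h215 : ¬((((a + 1) + 1) - 1) + (((b - 1) + 1) + 1) = 0) := fun hh => h204 (by linear_combination (1 : ℂ) * hh)
                have h216 : (((((c - 1) + 1) - 1 - 1) + 1) - 1) + (((b - 1) + 1) + 1) = 0 := by linear_combination (1 : ℂ) * h195
                have e217 : t ((((((c - 1) + 1) - 1 - 1) + 1) - 1), (((a + 1) + 1) - 1), (((b - 1) + 1) + 1)) = (((((b - 1) + 1) + 1) - 1), ((((((c - 1) + 1) - 1 - 1) + 1) - 1) + 1), (((a + 1) + 1) - 1)) := t_sz h215 h216
                have h218 : ((((((c - 1) + 1) - 1 - 1) + 1) - 1) + 1) + (((a + 1) + 1) - 1) = 0 := by linear_combination (1 : ℂ) * h157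
                have h219 : ¬(((((b - 1) + 1) + 1) - 1) + ((((a + 1) + 1) - 1) - 1) = 0) := fun hh => h198 (by linear_combination (1 : ℂ) * hh)
                have e220 : t (((((b - 1) + 1) + 1) - 1), ((((((c - 1) + 1) - 1 - 1) + 1) - 1) + 1), (((a + 1) + 1) - 1)) = (((((a + 1) + 1) - 1) - 1), ((((b - 1) + 1) + 1) - 1), (((((((c - 1) + 1) - 1 - 1) + 1) - 1) + 1) + 1)) := t_zs h218 h219
                have hfix : t^[9] (a, b, c) = (a, b, c) := by
                  show t (t (t (t (t (t (t (t (t ((a, b, c)))))))))) = (a, b, c)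
                  rw [e158, e196, e200, e203, e208, e211, e214, e217, e220]
                  rw [Prod.mk.injEq, Prod.mk.injEq]
                  exact ⟨by linear_combination, by linear_combination, by linear_combination⟩
                rw [show (180 : ℕ) = 9 * 20 from rfl, Function.iterate_mul]
                exact Function.iterate_fixed hfix 20
        · -- case false
          have e221 : t ((c - 1), (a + 1), b) = (b, (c - 1), (a + 1)) := t_ss h159 h195
          have h222 : (c - 1) + (a + 1) = 0 := by linear_combination (1 : ℂ) * h157
          by_cases h223 : b + ((a + 1) - 1) = 0
          · -- case true
            have e224 : t (b, (c - 1), (a + 1)) = (((a + 1) - 1 - 1), (b + 1), ((c - 1) + 1)) := t_zz h222 h223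
            by_cases h225 : (b + 1) + ((c - 1) + 1) = 0
            · -- case true
              have h226 : ¬(((a + 1) - 1 - 1) + (((c - 1) + 1) - 1) = 0) := fun hh => h195 (by linear_combination (1 : ℂ) * hh + (-1 : ℂ) * h157 + (1 : ℂ) * h225)
              have e227 : t (((a + 1) - 1 - 1), (b + 1), ((c - 1) + 1)) = ((((c - 1) + 1) - 1), ((a + 1) - 1 - 1), ((b + 1) + 1)) := t_zs h225 h226
              have h228 : ¬(((a + 1) - 1 - 1) + ((b + 1) + 1) = 0) := fun hh => h159 (by linear_combination (1 : ℂ) * hh)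
              have h229 : (((c - 1) + 1) - 1) + ((b + 1) + 1) = 0 := by linear_combination (1 : ℂ) * h225
              have e230 : t ((((c - 1) + 1) - 1), ((a + 1) - 1 - 1), ((b + 1) + 1)) = ((((b + 1) + 1) - 1), ((((c - 1) + 1) - 1) + 1), ((a + 1) - 1 - 1)) := t_sz h228 h229
              have hfix : t^[5] (a, b, c) = (a, b, c) := by
                show t (t (t (t (t ((a, b, c)))))) = (a, b, c)
                rw [e158, e221, e224, e227, e230]
                rw [Prod.mk.injEq, Prod.mk.injEq]
                exact ⟨by linear_combination (-1 : ℂ) * h157 + (1 : ℂ) * h225, by linear_combination (1 : ℂ) * h157 + (-1 : ℂ) * h223, by linear_combination (1 : ℂ) * h223 + (-1 : ℂ) * h225⟩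
              rw [show (180 : ℕ) = 5 * 36 from rfl, Function.iterate_mul]
              exact Function.iterate_fixed hfix 36
            · -- case false
              by_cases h231 : ((a + 1) - 1 - 1) + ((c - 1) + 1) = 0
              · exact absurd (show (1 : ℂ) = 0 by linear_combination (1 : ℂ) * h157 + (-1 : ℂ) * h231) one_ne_zero
              · -- case false
                have e232 : t (((a + 1) - 1 - 1), (b + 1), ((c - 1) + 1)) = (((c - 1) + 1), ((a + 1) - 1 - 1), (b + 1)) := t_ss h225 h231
                have h233 : ((a + 1) - 1 - 1) + (b + 1) = 0 := by linear_combination (1 : ℂ) * h223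
                have h234 : ¬(((c - 1) + 1) + ((b + 1) - 1) = 0) := fun hh => h1 (by linear_combination (1 : ℂ) * hh)
                have e235 : t (((c - 1) + 1), ((a + 1) - 1 - 1), (b + 1)) = (((b + 1) - 1), ((c - 1) + 1), (((a + 1) - 1 - 1) + 1)) := t_zs h233 h234
                have h236 : ((c - 1) + 1) + (((a + 1) - 1 - 1) + 1) = 0 := by linear_combination (1 : ℂ) * h157
                have h237 : ¬(((b + 1) - 1) + ((((a + 1) - 1 - 1) + 1) - 1) = 0) := fun hh => h231 (by linear_combination (1 : ℂ) * hh + (1 : ℂ) * h157 + (-1 : ℂ) * h223)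
                have e238 : t (((b + 1) - 1), ((c - 1) + 1), (((a + 1) - 1 - 1) + 1)) = (((((a + 1) - 1 - 1) + 1) - 1), ((b + 1) - 1), (((c - 1) + 1) + 1)) := t_zs h236 h237
                have h239 : ¬(((b + 1) - 1) + (((c - 1) + 1) + 1) = 0) := fun hh => h225 (by linear_combination (1 : ℂ) * hh)
                have h240 : ((((a + 1) - 1 - 1) + 1) - 1) + (((c - 1) + 1) + 1) = 0 := by linear_combination (1 : ℂ) * h157
                have e241 : t (((((a + 1) - 1 - 1) + 1) - 1), ((b + 1) - 1), (((c - 1) + 1) + 1)) = (((((c - 1) + 1) + 1) - 1), (((((a + 1) - 1 - 1) + 1) - 1) + 1), ((b + 1) - 1)) := t_sz h239 h240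
                have h242 : (((((a + 1) - 1 - 1) + 1) - 1) + 1) + ((b + 1) - 1) = 0 := by linear_combination (1 : ℂ) * h223
                have h243 : ¬(((((c - 1) + 1) + 1) - 1) + (((b + 1) - 1) - 1) = 0) := fun hh => h195 (by linear_combination (1 : ℂ) * hh)
                have e244 : t (((((c - 1) + 1) + 1) - 1), (((((a + 1) - 1 - 1) + 1) - 1) + 1), ((b + 1) - 1)) = ((((b + 1) - 1) - 1), ((((c - 1) + 1) + 1) - 1), ((((((a + 1) - 1 - 1) + 1) - 1) + 1) + 1)) := t_zs h242 h243
                have h245 : ¬(((((c - 1) + 1) + 1) - 1) + ((((((a + 1) - 1 - 1) + 1) - 1) + 1) + 1) = 0) := fun hh => h159 (by linear_combination (1 : ℂ) * hh + (-1 : ℂ) * h157 + (1 : ℂ) * h223)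
                have h246 : (((b + 1) - 1) - 1) + ((((((a + 1) - 1 - 1) + 1) - 1) + 1) + 1) = 0 := by linear_combination (1 : ℂ) * h223
                have e247 : t ((((b + 1) - 1) - 1), ((((c - 1) + 1) + 1) - 1), ((((((a + 1) - 1 - 1) + 1) - 1) + 1) + 1)) = ((((((((a + 1) - 1 - 1) + 1) - 1) + 1) + 1) - 1), ((((b + 1) - 1) - 1) + 1), ((((c - 1) + 1) + 1) - 1)) := t_sz h245 h246
                have hfix : t^[9] (a, b, c) = (a, b, c) := by
                  show t (t (t (t (t (t (t (t (t ((a, b, c)))))))))) = (a, b, c)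
                  rw [e158, e221, e224, e232, e235, e238, e241, e244, e247]
                  rw [Prod.mk.injEq, Prod.mk.injEq]
                  exact ⟨by linear_combination, by linear_combination, by linear_combination⟩
                rw [show (180 : ℕ) = 9 * 20 from rfl, Function.iterate_mul]
                exact Function.iterate_fixed hfix 20
          · -- case false
            have e248 : t (b, (c - 1), (a + 1)) = (((a + 1) - 1), b, ((c - 1) + 1)) := t_zs h222 h223
            have hfix : t^[3] (a, b, c) = (a, b, c) := by
              show t (t (t ((a, b, c)))) = (a, b, c)
              rw [e158, e221, e248]
              rw [Prod.mk.injEq, Prod.mk.injEq]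
              exact ⟨by linear_combination, by linear_combination, by linear_combination⟩
            rw [show (180 : ℕ) = 3 * 60 from rfl, Function.iterate_mul]
            exact Function.iterate_fixed hfix 60
    · -- case false
      have e249 : t (a, b, c) = (c, a, b) := t_ss h1 h157
      by_cases h250 : a + b = 0
      · -- case true
        by_cases h251 : c + (b - 1) = 0
        · -- case true
          have e252 : t (c, a, b) = ((b - 1 - 1), (c + 1), (a + 1)) := t_zz h250 h251
          by_cases h253 : (c + 1) + (a + 1) = 0
          · -- case true
            have h254 : ¬((b - 1 - 1) + ((a + 1) - 1) = 0) := fun hh => h157 (by linear_combination (1 : ℂ) * hh + (-1 : ℂ) * h250 + (1 : ℂ) * h253)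
            have e255 : t ((b - 1 - 1), (c + 1), (a + 1)) = (((a + 1) - 1), (b - 1 - 1), ((c + 1) + 1)) := t_zs h253 h254
            have h256 : ¬((b - 1 - 1) + ((c + 1) + 1) = 0) := fun hh => h1 (by linear_combination (1 : ℂ) * hh)
            have h257 : ((a + 1) - 1) + ((c + 1) + 1) = 0 := by linear_combination (1 : ℂ) * h253
            have e258 : t (((a + 1) - 1), (b - 1 - 1), ((c + 1) + 1)) = ((((c + 1) + 1) - 1), (((a + 1) - 1) + 1), (b - 1 - 1)) := t_sz h256 h257
            by_cases h259 : (((a + 1) - 1) + 1) + (b - 1 - 1) = 0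
            · exact absurd (show (1 : ℂ) = 0 by linear_combination (1 : ℂ) * h250 + (-1 : ℂ) * h259) one_ne_zero
            · -- case false
              have h260 : (((c + 1) + 1) - 1) + (b - 1 - 1) = 0 := by linear_combination (1 : ℂ) * h251
              have e261 : t ((((c + 1) + 1) - 1), (((a + 1) - 1) + 1), (b - 1 - 1)) = (((b - 1 - 1) - 1), ((((c + 1) + 1) - 1) + 1), (((a + 1) - 1) + 1)) := t_sz h259 h260
              have hfix : t^[5] (a, b, c) = (a, b, c) := by
                show t (t (t (t (t ((a, b, c)))))) = (a, b, c)
                rw [e249, e252, e255, e258, e261]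
                rw [Prod.mk.injEq, Prod.mk.injEq]
                exact ⟨by linear_combination (1 : ℂ) * h251 + (-1 : ℂ) * h253, by linear_combination (-1 : ℂ) * h250 + (1 : ℂ) * h253, by linear_combination (1 : ℂ) * h250 + (-1 : ℂ) * h251⟩
              rw [show (180 : ℕ) = 5 * 36 from rfl, Function.iterate_mul]
              exact Function.iterate_fixed hfix 36
          · -- case false
            by_cases h262 : (b - 1 - 1) + (a + 1) = 0
            · exact absurd (show (1 : ℂ) = 0 by linear_combination (1 : ℂ) * h250 + (-1 : ℂ) * h262) one_ne_zero
            · -- case false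
              have e263 : t ((b - 1 - 1), (c + 1), (a + 1)) = ((a + 1), (b - 1 - 1), (c + 1)) := t_ss h253 h262
              have h264 : (b - 1 - 1) + (c + 1) = 0 := by linear_combination (1 : ℂ) * h251
              by_cases h265 : (a + 1) + ((c + 1) - 1) = 0
              · -- case true
                have e266 : t ((a + 1), (b - 1 - 1), (c + 1)) = (((c + 1) - 1 - 1), ((a + 1) + 1), ((b - 1 - 1) + 1)) := t_zz h264 h265
                have hfix : t^[4] (a, b, c) = (a, b, c) := by
                  show t (t (t (t ((a, b, c))))) = (a, b, c)
                  rw [e249, e252, e263, e266]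
                  rw [Prod.mk.injEq, Prod.mk.injEq]
                  exact ⟨by linear_combination (-1 : ℂ) * h250 + (1 : ℂ) * h251, by linear_combination (-1 : ℂ) * h251 + (1 : ℂ) * h265, by linear_combination (1 : ℂ) * h250 + (-1 : ℂ) * h265⟩
                rw [show (180 : ℕ) = 4 * 45 from rfl, Function.iterate_mul]
                exact Function.iterate_fixed hfix 45
              · -- case false
                have e267 : t ((a + 1), (b - 1 - 1), (c + 1)) = (((c + 1) - 1), (a + 1), ((b - 1 - 1) + 1)) := t_zs h264 h265
                have h268 : (a + 1) + ((b - 1 - 1) + 1) = 0 := by linear_combination (1 : ℂ) * h250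
                have h269 : ¬(((c + 1) - 1) + (((b - 1 - 1) + 1) - 1) = 0) := fun hh => h262 (by linear_combination (1 : ℂ) * hh + (1 : ℂ) * h250 + (-1 : ℂ) * h251)
                have e270 : t (((c + 1) - 1), (a + 1), ((b - 1 - 1) + 1)) = ((((b - 1 - 1) + 1) - 1), ((c + 1) - 1), ((a + 1) + 1)) := t_zs h268 h269
                have h271 : ¬(((c + 1) - 1) + ((a + 1) + 1) = 0) := fun hh => h253 (by linear_combination (1 : ℂ) * hh)
                have h272 : (((b - 1 - 1) + 1) - 1) + ((a + 1) + 1) = 0 := by linear_combination (1 : ℂ) * h250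
                have e273 : t ((((b - 1 - 1) + 1) - 1), ((c + 1) - 1), ((a + 1) + 1)) = ((((a + 1) + 1) - 1), ((((b - 1 - 1) + 1) - 1) + 1), ((c + 1) - 1)) := t_sz h271 h272
                have h274 : ((((b - 1 - 1) + 1) - 1) + 1) + ((c + 1) - 1) = 0 := by linear_combination (1 : ℂ) * h251
                have h275 : ¬((((a + 1) + 1) - 1) + (((c + 1) - 1) - 1) = 0) := fun hh => h157 (by linear_combination (1 : ℂ) * hh)
                have e276 : t ((((a + 1) + 1) - 1), ((((b - 1 - 1) + 1) - 1) + 1), ((c + 1) - 1)) = ((((c + 1) - 1) - 1), (((a + 1) + 1) - 1), (((((b - 1 - 1) + 1) - 1) + 1) + 1)) := t_zs h274 h275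
                have h277 : ¬((((a + 1) + 1) - 1) + (((((b - 1 - 1) + 1) - 1) + 1) + 1) = 0) := fun hh => h1 (by linear_combination (1 : ℂ) * hh + (-1 : ℂ) * h250 + (1 : ℂ) * h251)
                have h278 : (((c + 1) - 1) - 1) + (((((b - 1 - 1) + 1) - 1) + 1) + 1) = 0 := by linear_combination (1 : ℂ) * h251
                have e279 : t ((((c + 1) - 1) - 1), (((a + 1) + 1) - 1), (((((b - 1 - 1) + 1) - 1) + 1) + 1)) = (((((((b - 1 - 1) + 1) - 1) + 1) + 1) - 1), ((((c + 1) - 1) - 1) + 1), (((a + 1) + 1) - 1)) := t_sz h277 h278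
                have h280 : ¬(((((c + 1) - 1) - 1) + 1) + (((a + 1) + 1) - 1) = 0) := fun hh => h265 (by linear_combination (1 : ℂ) * hh)
                have h281 : ((((((b - 1 - 1) + 1) - 1) + 1) + 1) - 1) + (((a + 1) + 1) - 1) = 0 := by linear_combination (1 : ℂ) * h250
                have e282 : t (((((((b - 1 - 1) + 1) - 1) + 1) + 1) - 1), ((((c + 1) - 1) - 1) + 1), (((a + 1) + 1) - 1)) = (((((a + 1) + 1) - 1) - 1), (((((((b - 1 - 1) + 1) - 1) + 1) + 1) - 1) + 1), ((((c + 1) - 1) - 1) + 1)) := t_sz h280 h281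
                have hfix : t^[9] (a, b, c) = (a, b, c) := by
                  show t (t (t (t (t (t (t (t (t ((a, b, c)))))))))) = (a, b, c)
                  rw [e249, e252, e263, e267, e270, e273, e276, e279, e282]
                  rw [Prod.mk.injEq, Prod.mk.injEq]
                  exact ⟨by linear_combination, by linear_combination, by linear_combination⟩
                rw [show (180 : ℕ) = 9 * 20 from rfl, Function.iterate_mul]
                exact Function.iterate_fixed hfix 20
        · -- case false
          have e283 : t (c, a, b) = ((b - 1), c, (a + 1)) := t_zs h250 h251
          by_cases h284 : c + (a + 1) = 0
          · -- case true
            have h285 : ¬((b - 1) + ((a + 1) - 1) = 0) := fun hh => h157 (by linear_combination (1 : ℂ) * hh + (-1 : ℂ) * h250 + (1 : ℂ) * h284)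
            have e286 : t ((b - 1), c, (a + 1)) = (((a + 1) - 1), (b - 1), (c + 1)) := t_zs h284 h285
            have h287 : ¬((b - 1) + (c + 1) = 0) := fun hh => h1 (by linear_combination (1 : ℂ) * hh)
            have h288 : ((a + 1) - 1) + (c + 1) = 0 := by linear_combination (1 : ℂ) * h284
            have e289 : t (((a + 1) - 1), (b - 1), (c + 1)) = (((c + 1) - 1), (((a + 1) - 1) + 1), (b - 1)) := t_sz h287 h288
            have h290 : (((a + 1) - 1) + 1) + (b - 1) = 0 := by linear_combination (1 : ℂ) * h250
            by_cases h291 : ((c + 1) - 1) + ((b - 1) - 1) = 0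
            · -- case true
              have e292 : t (((c + 1) - 1), (((a + 1) - 1) + 1), (b - 1)) = (((b - 1) - 1 - 1), (((c + 1) - 1) + 1), ((((a + 1) - 1) + 1) + 1)) := t_zz h290 h291
              have hfix : t^[5] (a, b, c) = (a, b, c) := by
                show t (t (t (t (t ((a, b, c)))))) = (a, b, c)
                rw [e249, e283, e286, e289, e292]
                rw [Prod.mk.injEq, Prod.mk.injEq]
                exact ⟨by linear_combination (-1 : ℂ) * h284 + (1 : ℂ) * h291, by linear_combination (-1 : ℂ) * h250 + (1 : ℂ) * h284, by linear_combination (1 : ℂ) * h250 + (-1 : ℂ) * h291⟩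
              rw [show (180 : ℕ) = 5 * 36 from rfl, Function.iterate_mul]
              exact Function.iterate_fixed hfix 36
            · -- case false
              have e293 : t (((c + 1) - 1), (((a + 1) - 1) + 1), (b - 1)) = (((b - 1) - 1), ((c + 1) - 1), ((((a + 1) - 1) + 1) + 1)) := t_zs h290 h291
              by_cases h294 : ((c + 1) - 1) + ((((a + 1) - 1) + 1) + 1) = 0
              · exact absurd (show (1 : ℂ) = 0 by linear_combination (-1 : ℂ) * h284 + (1 : ℂ) * h294) one_ne_zero
              · -- case false
                have h295 : ((b - 1) - 1) + ((((a + 1) - 1) + 1) + 1) = 0 := by linear_combination (1 : ℂ) * h250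
                have e296 : t (((b - 1) - 1), ((c + 1) - 1), ((((a + 1) - 1) + 1) + 1)) = ((((((a + 1) - 1) + 1) + 1) - 1), (((b - 1) - 1) + 1), ((c + 1) - 1)) := t_sz h294 h295
                have h297 : ¬((((b - 1) - 1) + 1) + ((c + 1) - 1) = 0) := fun hh => h251 (by linear_combination (1 : ℂ) * hh)
                have h298 : (((((a + 1) - 1) + 1) + 1) - 1) + ((c + 1) - 1) = 0 := by linear_combination (1 : ℂ) * h284
                have e299 : t ((((((a + 1) - 1) + 1) + 1) - 1), (((b - 1) - 1) + 1), ((c + 1) - 1)) = ((((c + 1) - 1) - 1), ((((((a + 1) - 1) + 1) + 1) - 1) + 1), (((b - 1) - 1) + 1)) := t_sz h297 h298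
                have h300 : ¬(((((((a + 1) - 1) + 1) + 1) - 1) + 1) + (((b - 1) - 1) + 1) = 0) := fun hh => h294 (by linear_combination (1 : ℂ) * hh + (-1 : ℂ) * h250 + (1 : ℂ) * h284)
                have h301 : ¬((((c + 1) - 1) - 1) + (((b - 1) - 1) + 1) = 0) := fun hh => h291 (by linear_combination (1 : ℂ) * hh)
                have e302 : t ((((c + 1) - 1) - 1), ((((((a + 1) - 1) + 1) + 1) - 1) + 1), (((b - 1) - 1) + 1)) = ((((b - 1) - 1) + 1), (((c + 1) - 1) - 1), ((((((a + 1) - 1) + 1) + 1) - 1) + 1)) := t_ss h300 h301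
                have h303 : (((c + 1) - 1) - 1) + ((((((a + 1) - 1) + 1) + 1) - 1) + 1) = 0 := by linear_combination (1 : ℂ) * h284
                have h304 : (((b - 1) - 1) + 1) + (((((((a + 1) - 1) + 1) + 1) - 1) + 1) - 1) = 0 := by linear_combination (1 : ℂ) * h250
                have e305 : t ((((b - 1) - 1) + 1), (((c + 1) - 1) - 1), ((((((a + 1) - 1) + 1) + 1) - 1) + 1)) = ((((((((a + 1) - 1) + 1) + 1) - 1) + 1) - 1 - 1), ((((b - 1) - 1) + 1) + 1), ((((c + 1) - 1) - 1) + 1)) := t_zz h303 h304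
                have hfix : t^[9] (a, b, c) = (a, b, c) := by
                  show t (t (t (t (t (t (t (t (t ((a, b, c)))))))))) = (a, b, c)
                  rw [e249, e283, e286, e289, e293, e296, e299, e302, e305]
                  rw [Prod.mk.injEq, Prod.mk.injEq]
                  exact ⟨by linear_combination, by linear_combination, by linear_combination⟩
                rw [show (180 : ℕ) = 9 * 20 from rfl, Function.iterate_mul]
                exact Function.iterate_fixed hfix 20
          · -- case false
            have h306 : (b - 1) + (a + 1) = 0 := by linear_combination (1 : ℂ) * h250
            have e307 : t ((b - 1), c, (a + 1)) = (((a + 1) - 1), ((b - 1) + 1), c) := t_sz h284 h306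
            have hfix : t^[3] (a, b, c) = (a, b, c) := by
              show t (t (t ((a, b, c)))) = (a, b, c)
              rw [e249, e283, e307]
              rw [Prod.mk.injEq, Prod.mk.injEq]
              exact ⟨by linear_combination, by linear_combination, by linear_combination⟩
            rw [show (180 : ℕ) = 3 * 60 from rfl, Function.iterate_mul]
            exact Function.iterate_fixed hfix 60
      · -- case false
        have h308 : ¬(c + b = 0) := fun hh => h1 (by linear_combination (1 : ℂ) * hh)
        have e309 : t (c, a, b) = (b, c, a) := t_ss h250 h308
        have h310 : ¬(c + a = 0) := fun hh => h157 (by linear_combination (1 : ℂ) * hh)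
        have h311 : ¬(b + a = 0) := fun hh => h250 (by linear_combination (1 : ℂ) * hh)
        have e312 : t (b, c, a) = (a, b, c) := t_ss h310 h311
        have hfix : t^[3] (a, b, c) = (a, b, c) := by
          show t (t (t ((a, b, c)))) = (a, b, c)
          rw [e249, e309, e312]
        rw [show (180 : ℕ) = 3 * 60 from rfl, Function.iterate_mul]
        exact Function.iterate_fixed hfix 60

lemma iter_patch {n : ℕ} {i : ℕ} (hi : 1 ≤ i) (hin : i + 2 ≤ n) (lam : Fin n → ℂ)
    (k : ℕ) (p : ℂ × ℂ × ℂ) :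
    (fun mu => sStar i (sStar (i + 1) mu))^[k] (patch i lam p) = patch i lam (t^[k] p) := by
  induction k generalizing p with
  | zero => rfl
  | succ k ih =>
    rw [Function.iterate_succ_apply, Function.iterate_succ_apply]
    show (fun mu => sStar i (sStar (i + 1) mu))^[k] (sStar i (sStar (i + 1) (patch i lam p))) =
      patch i lam (t^[k] (t p))
    rw [step_patch hi hin lam p]
    exact ih (t p)

theorem stmt9 (n : ℕ) (hn : 2 ≤ n) (i : ℕ) (hi1 : 1 ≤ i) (hi2 : i ≤ n - 2)
    (lam : Fin n → ℂ) :
    (fun mu => sStar i (sStar (i + 1) mu))^[180] lam = lam := by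
  have hin : i + 2 ≤ n := by omega
  have h0 := patch_self hi1 hin lam
  conv_lhs => rw [← h0]
  rw [iter_patch hi1 hin lam 180, t180]
  exact h0
end

section
/- Let n ≥ 2 and let σ_1, …, σ_{n−1} ∈ S_n be the adjacent transpositions σ_i = (i, i+1). Call a word (i_1, …, i_ℓ) in {1,…,n−1} reduced for a permutation w if σ_{i_1} σ_{i_2} ⋯ σ_{i_ℓ} = w and no product of fewer than ℓ adjacent transpositions equals w. Then a permutation w ∈ S_n has exactly one reduced word if and only if w is the identity, or there exist 1 ≤ i ≤ k ≤ n−1 with w = σ_i σ_{i+1} ⋯ σ_k, or there exist 1 ≤ k ≤ i ≤ n−1 with w = σ_i σ_{i−1} ⋯ σ_k. -/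
/-- The adjacent transposition `σ_i = (i, i+1)` (1-based) in `S_n`,
defined to be `1` when `i` is out of range. -/
def sigma (n : ℕ) (i : ℕ) : Equiv.Perm (Fin n) :=
  if h : 1 ≤ i ∧ i < n then Equiv.swap (⟨i - 1, by omega⟩ : Fin n) ⟨i, h.2⟩ else 1

/-- A word in the letters `{1, …, n-1}`. -/
def IsWord (n : ℕ) (L : List ℕ) : Prop := ∀ x ∈ L, 1 ≤ x ∧ x ≤ n - 1

/-- `L = (i_1, …, i_ℓ)` is a reduced word for `w` : the product
`σ_{i_1} σ_{i_2} ⋯ σ_{i_ℓ}` equals `w` and no product of fewer adjacent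
transpositions equals `w`. -/
def IsReducedWord (n : ℕ) (w : Equiv.Perm (Fin n)) (L : List ℕ) : Prop :=
  IsWord n L ∧ (L.map (sigma n)).prod = w ∧
  ∀ L' : List ℕ, IsWord n L' → (L'.map (sigma n)).prod = w → L.length ≤ L'.length


/-!
Each `σ_j` changes the number of inversions by exactly one, so a word is at least as long as the
number of inversions of its product. The run `σ_i ⋯ σ_k` has `k + 1 - i` inversions, hence its
canonical word is reduced, and it is the only reduced word: a word of minimal length must begin
with a descent, and `i` is the only descent of `σ_i ⋯ σ_k`. Decreasing runs follow by reversing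
words. Conversely, a unique reduced word admits no commutation and no braid move, so consecutive
letters differ by one and no factor `a b a` occurs; such a word is an increasing or decreasing run.
-/

open Equiv

lemma sigma_eq_swap {n i : ℕ} (h1 : 1 ≤ i) (h2 : i < n) :
    sigma n i = swap (⟨i - 1, by omega⟩ : Fin n) ⟨i, h2⟩ :=
  dif_pos ⟨h1, h2⟩

@[simp]
lemma sigma_mul_self (n i : ℕ) : sigma n i * sigma n i = 1 := by
  unfold sigma
  split_ifs <;> simp

lemma sigma_inv (n i : ℕ) : (sigma n i)⁻¹ = sigma n i :=
  inv_eq_of_mul_eq_one_right (sigma_mul_self n i)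

lemma val_sigma_apply {n i : ℕ} (h1 : 1 ≤ i) (h2 : i < n) (x : Fin n) :
    (sigma n i x : ℕ) = if (x : ℕ) = i - 1 then i else if (x : ℕ) = i then i - 1 else x := by
  rw [sigma_eq_swap h1 h2, swap_apply_def]
  split_ifs <;> simp only [Fin.ext_iff] at * <;> omega

lemma sigma_mul_comm {n a b : ℕ} (hab : a + 1 < b ∨ b + 1 < a) :
    sigma n a * sigma n b = sigma n b * sigma n a := by
  by_cases ha : 1 ≤ a ∧ a < n
  · by_cases hb : 1 ≤ b ∧ b < n
    · refine Equiv.ext fun x => Fin.ext ?_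
      simp only [Perm.mul_apply, val_sigma_apply ha.1 ha.2, val_sigma_apply hb.1 hb.2]
      split_ifs <;> omega
    · simp [sigma, hb]
  · simp [sigma, ha]

lemma sigma_braid {n a : ℕ} (ha : 1 ≤ a) (han : a + 1 < n) :
    sigma n a * sigma n (a + 1) * sigma n a = sigma n (a + 1) * sigma n a * sigma n (a + 1) := by
  refine Equiv.ext fun x => Fin.ext ?_
  simp only [Perm.mul_apply, val_sigma_apply ha (by omega : a < n),
    val_sigma_apply (by omega : 1 ≤ a + 1) han, Nat.add_sub_cancel]
  split_ifs <;> omega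

def inversions {n : ℕ} (w : Perm (Fin n)) : Finset (Fin n × Fin n) :=
  Finset.univ.filter fun p => p.1 < p.2 ∧ w p.2 < w p.1

def invCount {n : ℕ} (w : Perm (Fin n)) : ℕ := (inversions w).card

lemma mem_inversions {n : ℕ} {w : Perm (Fin n)} {p : Fin n × Fin n} :
    p ∈ inversions w ↔ p.1 < p.2 ∧ w p.2 < w p.1 := by
  simp [inversions]

@[simp]
lemma invCount_one (n : ℕ) : invCount (1 : Perm (Fin n)) = 0 := by
  rw [invCount, Finset.card_eq_zero, Finset.eq_empty_iff_forall_notMem]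
  exact fun p hp => lt_asymm (mem_inversions.1 hp).1 (mem_inversions.1 hp).2

lemma inversions_swap_mul_of_lt {n : ℕ} {x y p q : Fin n} (hxy : (x : ℕ) + 1 = y)
    {v : Perm (Fin n)} (hp : v p = x) (hq : v q = y) (hpq : p < q) :
    inversions (swap x y * v) = insert (p, q) (inversions v) := by
  ext ⟨r, s⟩
  have hr : v r = x ↔ r = p := by rw [← hp, v.injective.eq_iff]
  have hs : v s = y ↔ s = q := by rw [← hq, v.injective.eq_iff]
  have hr' : v r = y ↔ r = q := by rw [← hq, v.injective.eq_iff]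
  have hs' : v s = x ↔ s = p := by rw [← hp, v.injective.eq_iff]
  have hrs : v r = v s ↔ r = s := v.injective.eq_iff
  simp only [mem_inversions, Finset.mem_insert, Prod.mk.injEq, Perm.mul_apply, swap_apply_def]
  generalize v r = a, v s = b at *
  simp only [Fin.ext_iff, Fin.lt_def] at *
  split_ifs <;> omega

lemma invCount_swap_mul_of_lt {n : ℕ} {x y p q : Fin n} (hxy : (x : ℕ) + 1 = y)
    {v : Perm (Fin n)} (hp : v p = x) (hq : v q = y) (hpq : p < q) :
    invCount (swap x y * v) = invCount v + 1 := by
  have hnot : (p, q) ∉ inversions v := by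
    rw [mem_inversions, hp, hq, Fin.lt_def]
    omega
  rw [invCount, inversions_swap_mul_of_lt hxy hp hq hpq, Finset.card_insert_of_notMem hnot,
    invCount]

lemma invCount_sigma_mul {n j : ℕ} (h1 : 1 ≤ j) (h2 : j < n) (v : Perm (Fin n)) :
    invCount (sigma n j * v) = invCount v + 1 ∨
      ∃ p q : Fin n, p < q ∧ (v p : ℕ) = j ∧ (v q : ℕ) + 1 = j ∧
        invCount v = invCount (sigma n j * v) + 1 := by
  set x : Fin n := ⟨j - 1, by omega⟩
  set y : Fin n := ⟨j, h2⟩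
  have hxy : (x : ℕ) + 1 = y := by simp only [x, y]; omega
  rw [sigma_eq_swap h1 h2]
  rcases lt_or_gt_of_ne (v.symm.injective.ne (Fin.ne_of_val_ne (by omega) : x ≠ y)) with h | h
  · exact Or.inl (invCount_swap_mul_of_lt hxy (by simp) (by simp) h)
  · refine Or.inr ⟨v.symm y, v.symm x, h, by simp [y], by simp [x]; omega, ?_⟩
    conv_lhs => rw [← swap_mul_self_mul x y v]
    exact invCount_swap_mul_of_lt hxy (by simp) (by simp) h

lemma invCount_sigma_mul_le {n j : ℕ} (h1 : 1 ≤ j) (h2 : j < n) (v : Perm (Fin n)) :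
    invCount (sigma n j * v) ≤ invCount v + 1 := by
  rcases invCount_sigma_mul h1 h2 v with h | ⟨-, -, -, -, -, h⟩ <;> omega

lemma exists_inversion_of_invCount_sigma_mul_lt {n j : ℕ} (h1 : 1 ≤ j) (h2 : j < n)
    {v : Perm (Fin n)} (h : invCount (sigma n j * v) < invCount v) :
    ∃ p q : Fin n, p < q ∧ (v p : ℕ) = j ∧ (v q : ℕ) + 1 = j := by
  rcases invCount_sigma_mul h1 h2 v with h' | ⟨p, q, hpq, hp, hq, -⟩
  · omega
  · exact ⟨p, q, hpq, hp, hq⟩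

lemma invCount_prod_le_length {n : ℕ} {L : List ℕ} (hL : IsWord n L) :
    invCount (L.map (sigma n)).prod ≤ L.length := by
  induction L with
  | nil => simp
  | cons j T ih =>
    obtain ⟨h1, h2⟩ := hL j List.mem_cons_self
    have := ih fun x hx => hL x (List.mem_cons_of_mem j hx)
    have := invCount_sigma_mul_le h1 (by omega) (T.map (sigma n)).prod
    simp only [List.map_cons, List.prod_cons, List.length_cons]
    omega

lemma exists_inversion_of_length_le_invCount {n j : ℕ} {T : List ℕ} (hL : IsWord n (j :: T))
    (hlen : T.length + 1 ≤ invCount ((j :: T).map (sigma n)).prod) :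
    ∃ p q : Fin n, p < q ∧ (((j :: T).map (sigma n)).prod p : ℕ) = j ∧
      (((j :: T).map (sigma n)).prod q : ℕ) + 1 = j := by
  obtain ⟨h1, h2⟩ := hL j List.mem_cons_self
  refine exists_inversion_of_invCount_sigma_mul_lt h1 (by omega) ?_
  have := invCount_prod_le_length fun x hx => hL x (List.mem_cons_of_mem j hx)
  rw [List.map_cons, List.prod_cons] at hlen ⊢
  rw [← mul_assoc, sigma_mul_self, one_mul]
  omega

lemma isReducedWord_one_iff {n : ℕ} {L : List ℕ} : IsReducedWord n 1 L ↔ L = [] := by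
  refine ⟨fun h => List.eq_nil_of_length_eq_zero ?_, ?_⟩
  · simpa using h.2.2 [] (by simp [IsWord]) rfl
  · rintro rfl
    exact ⟨by simp [IsWord], rfl, by simp⟩

lemma IsReducedWord.of_length_le {n : ℕ} {w : Perm (Fin n)} {L L' : List ℕ}
    (h : IsReducedWord n w L) (hL' : IsWord n L') (hprod : (L'.map (sigma n)).prod = w)
    (hlen : L'.length ≤ L.length) : IsReducedWord n w L' :=
  ⟨hL', hprod, fun M hM hMprod => hlen.trans (h.2.2 M hM hMprod)⟩

lemma IsReducedWord.tail {n j : ℕ} {w : Perm (Fin n)} {T : List ℕ}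
    (h : IsReducedWord n w (j :: T)) : IsReducedWord n (sigma n j * w) T := by
  obtain ⟨hword, hprod, hmin⟩ := h
  refine ⟨fun x hx => hword x (List.mem_cons_of_mem j hx), ?_, fun M hM hMprod => ?_⟩
  · rw [← hprod, List.map_cons, List.prod_cons, ← mul_assoc, sigma_mul_self, one_mul]
  · have := hmin (j :: M) (List.forall_mem_cons.2 ⟨hword j List.mem_cons_self, hM⟩)
      (by rw [List.map_cons, List.prod_cons, hMprod, ← mul_assoc, sigma_mul_self, one_mul])
    simpa using this

lemma prod_map_sigma_reverse (n : ℕ) (L : List ℕ) :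
    (L.reverse.map (sigma n)).prod = (L.map (sigma n)).prod⁻¹ := by
  rw [List.map_reverse, List.prod_inv_reverse, List.map_map]
  simp [Function.comp_def, sigma_inv]

lemma IsReducedWord.reverse {n : ℕ} {w : Perm (Fin n)} {L : List ℕ}
    (h : IsReducedWord n w L) : IsReducedWord n w⁻¹ L.reverse := by
  obtain ⟨hword, hprod, hmin⟩ := h
  refine ⟨fun x hx => hword x (List.mem_reverse.1 hx), by rw [prod_map_sigma_reverse, hprod],
    fun M hM hMprod => ?_⟩
  have := hmin M.reverse (fun x hx => hM x (List.mem_reverse.1 hx))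
    (by rw [prod_map_sigma_reverse, hMprod, inv_inv])
  simpa using this

lemma existsUnique_isReducedWord_inv_iff {n : ℕ} {w : Perm (Fin n)} :
    (∃! L, IsReducedWord n w⁻¹ L) ↔ ∃! L, IsReducedWord n w L := by
  have key : ∀ v : Perm (Fin n), (∃! L, IsReducedWord n v L) → ∃! L, IsReducedWord n v⁻¹ L := by
    rintro v ⟨L, hL, huniq⟩
    refine ⟨L.reverse, hL.reverse, fun M hM => ?_⟩
    rw [← huniq M.reverse (by simpa using hM.reverse), List.reverse_reverse]
  exact ⟨fun h => by simpa using key _ h, key w⟩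

/-- `σ_i σ_{i+1} ⋯ σ_k`, the identity when `k < i`. -/
def ascRun (n i k : ℕ) : Perm (Fin n) := ((List.range' i (k + 1 - i)).map (sigma n)).prod

lemma ascRun_eq_sigma_mul {n i k : ℕ} (h : i ≤ k) :
    ascRun n i k = sigma n i * ascRun n (i + 1) k := by
  rw [ascRun, ascRun, show k + 1 - i = k + 1 - (i + 1) + 1 by omega, List.range'_succ,
    List.map_cons, List.prod_cons]

/-- In `0`-based positions, `σ_i ⋯ σ_k` is the cycle `k ↦ i - 1 ↦ i ↦ ⋯ ↦ k`. -/
lemma val_ascRun_apply {n i k : ℕ} (hi : 1 ≤ i) (hik : i ≤ k + 1) (hk : k < n) (x : Fin n) :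
    (ascRun n i k x : ℕ) =
      if (x : ℕ) = k then i - 1 else if i - 1 ≤ (x : ℕ) ∧ (x : ℕ) < k then x + 1 else x := by
  obtain ⟨d, hd⟩ : ∃ d, k + 1 - i = d := ⟨_, rfl⟩
  induction d generalizing i with
  | zero =>
    rw [ascRun, hd]
    simp only [List.range'_zero, List.map_nil, List.prod_nil, Perm.one_apply]
    split_ifs <;> omega
  | succ d ih =>
    rw [ascRun_eq_sigma_mul (by omega), Perm.mul_apply, val_sigma_apply hi (by omega),
      ih (by omega) (by omega) (by omega)]
    split_ifs <;> omega

lemma invCount_ascRun {n i k : ℕ} (hi : 1 ≤ i) (hik : i ≤ k + 1) (hk : k < n) :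
    invCount (ascRun n i k) = k + 1 - i := by
  have hinv : inversions (ascRun n i k) =
      Finset.Ico (⟨i - 1, by omega⟩ : Fin n) ⟨k, hk⟩ ×ˢ {⟨k, hk⟩} := by
    ext ⟨r, s⟩
    have hr := val_ascRun_apply hi hik hk r
    have hs := val_ascRun_apply hi hik hk s
    simp only [mem_inversions, Finset.mem_product, Finset.mem_Ico, Finset.mem_singleton,
      Fin.lt_def, Fin.le_def, Fin.ext_iff] at hr hs ⊢
    split_ifs at hr hs <;> omega
  rw [invCount, hinv, Finset.card_product, Fin.card_Ico, Finset.card_singleton,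
    mul_one, Fin.val_mk, Fin.val_mk]
  omega

lemma isReducedWord_ascRun {n i k : ℕ} (hi : 1 ≤ i) (hik : i ≤ k + 1) (hk : k < n) :
    IsReducedWord n (ascRun n i k) (List.range' i (k + 1 - i)) := by
  refine ⟨fun x hx => ?_, rfl, fun L hL hprod => ?_⟩
  · rw [List.mem_range'_1] at hx
    omega
  · have := invCount_prod_le_length hL
    rw [hprod, invCount_ascRun hi hik hk] at this
    rwa [List.length_range']

lemma eq_of_ascRun_inversion {n i k j : ℕ} (hi : 1 ≤ i) (hik : i ≤ k + 1) (hk : k < n)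
    {p q : Fin n} (hpq : p < q) (hp : (ascRun n i k p : ℕ) = j)
    (hq : (ascRun n i k q : ℕ) + 1 = j) : j = i := by
  have := val_ascRun_apply hi hik hk p
  have := val_ascRun_apply hi hik hk q
  rw [Fin.lt_def] at hpq
  split_ifs at * <;> omega

lemma eq_range'_of_isReducedWord_ascRun {n i k : ℕ} {L : List ℕ} (hi : 1 ≤ i) (hik : i ≤ k + 1)
    (hk : k < n) (hL : IsReducedWord n (ascRun n i k) L) : L = List.range' i (k + 1 - i) := by
  have hlen : L.length = k + 1 - i := by
    have := hL.2.2 _ (isReducedWord_ascRun hi hik hk).1 rfl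
    have := invCount_prod_le_length hL.1
    rw [hL.2.1, invCount_ascRun hi hik hk] at this
    rw [List.length_range'] at *
    omega
  induction L generalizing i with
  | nil => rw [← hlen, List.length_nil, List.range'_zero]
  | cons j T ih =>
    rw [List.length_cons] at hlen
    obtain ⟨p, q, hpq, hp, hq⟩ := exists_inversion_of_length_le_invCount hL.1
      (by rw [hL.2.1, invCount_ascRun hi hik hk, ← hlen])
    rw [hL.2.1] at hp hq
    obtain rfl := eq_of_ascRun_inversion hi hik hk hpq hp hq
    have hT := hL.tail
    rw [ascRun_eq_sigma_mul (by omega), ← mul_assoc, sigma_mul_self, one_mul] at hT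
    rw [ih (by omega) (by omega) hT (by omega), show k + 1 - j = k + 1 - (j + 1) + 1 by omega,
      List.range'_succ]

lemma existsUnique_isReducedWord_ascRun {n i k : ℕ} (hi : 1 ≤ i) (hik : i ≤ k + 1) (hk : k < n) :
    ∃! L, IsReducedWord n (ascRun n i k) L :=
  ⟨_, isReducedWord_ascRun hi hik hk, fun _ hL => eq_range'_of_isReducedWord_ascRun hi hik hk hL⟩

lemma IsReducedWord.replace_infix {n : ℕ} {w : Perm (Fin n)} {A M M' B : List ℕ}
    (h : IsReducedWord n w (A ++ M ++ B)) (hM' : IsWord n M')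
    (hprod : (M'.map (sigma n)).prod = (M.map (sigma n)).prod) (hlen : M'.length = M.length) :
    IsReducedWord n w (A ++ M' ++ B) := by
  refine h.of_length_le (fun x hx => ?_) ?_ (by simp [hlen])
  · simp only [List.mem_append] at hx
    rcases hx with (hx | hx) | hx
    exacts [h.1 x (by simp [hx]), hM' x hx, h.1 x (by simp [hx])]
  · rw [← h.2.1]
    simp only [List.map_append, List.prod_append, hprod]

/-- Equal adjacent letters cancel, and far-apart ones commute into a second reduced word. -/
lemma IsReducedWord.isChain_of_unique {n : ℕ} {w : Perm (Fin n)} {L : List ℕ}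
    (hL : IsReducedWord n w L) (huniq : ∀ L', IsReducedWord n w L' → L' = L) :
    L.IsChain (fun a b => a + 1 = b ∨ b + 1 = a) := by
  rw [List.isChain_iff_forall_rel_of_append_cons_cons]
  rintro a b A B rfl
  have hL' : IsReducedWord n w (A ++ [a, b] ++ B) := by simpa using hL
  by_contra hab
  rcases eq_or_ne a b with rfl | hne
  · have := hL.2.2 (A ++ B) (fun x hx => hL.1 x (by simp at hx ⊢; tauto))
      (by rw [← hL'.2.1]; simp [← mul_assoc])
    simp at this
  · have := huniq _ (hL'.replace_infix (M' := [b, a])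
      (fun x hx => hL'.1 x (by simp at hx ⊢; tauto))
      (by simp [sigma_mul_comm (show a + 1 < b ∨ b + 1 < a by omega)]) rfl)
    simp at this
    omega

/-- A factor `a b a` with `|a - b| = 1` could be braided into `b a b`. -/
lemma IsReducedWord.not_infix_of_unique {n : ℕ} {w : Perm (Fin n)} {L : List ℕ}
    (hL : IsReducedWord n w L) (huniq : ∀ L', IsReducedWord n w L' → L' = L) (a b : ℕ) :
    ¬ [a, b, a] <:+: L := by
  rintro ⟨A, B, rfl⟩
  have hab := (hL.isChain_of_unique huniq).infix ⟨A, B, rfl⟩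
  simp only [List.isChain_cons_cons, List.isChain_singleton, and_true] at hab
  obtain ⟨ha1, ha⟩ := hL.1 a (by simp)
  obtain ⟨hb1, hb⟩ := hL.1 b (by simp)
  have hbraid : ([b, a, b].map (sigma n)).prod = ([a, b, a].map (sigma n)).prod := by
    rcases hab.1 with rfl | rfl
    · simp [← mul_assoc, sigma_braid ha1 (by omega : a + 1 < n)]
    · simp [← mul_assoc, sigma_braid hb1 (by omega : b + 1 < n)]
  have := huniq _ (hL.replace_infix (fun x hx => hL.1 x (by simp at hx ⊢; omega)) hbraid rfl)
  simp at this
  omega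

lemma isChain_succ_or_pred_of_not_infix {L : List ℕ}
    (hstep : L.IsChain (fun a b => a + 1 = b ∨ b + 1 = a)) (hturn : ∀ a b, ¬ [a, b, a] <:+: L) :
    L.IsChain (fun a b => a + 1 = b) ∨ L.IsChain (fun a b => b + 1 = a) := by
  induction L with
  | nil => simp
  | cons a T ih =>
    rcases T with _ | ⟨b, _ | ⟨c, T⟩⟩
    · simp
    · simpa using hstep
    · obtain ⟨hab, hstep⟩ := List.isChain_cons_cons.1 hstep
      have hturn' : ∀ x y, ¬ [x, y, x] <:+: b :: c :: T :=
        fun x y h => hturn x y (h.trans (List.suffix_cons a _).isInfix)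
      have hca : c ≠ a := by
        rintro rfl
        exact hturn _ b (List.prefix_append [_, b, _] T).isInfix
      rcases ih hstep hturn' with h | h
      · have hbc := (List.isChain_cons_cons.1 h).1
        exact Or.inl (h.cons_cons (by omega))
      · have hbc := (List.isChain_cons_cons.1 h).1
        exact Or.inr (h.cons_cons (by omega))

lemma eq_range'_of_isChain_succ {a : ℕ} {L : List ℕ}
    (h : (a :: L).IsChain (fun a b => a + 1 = b)) : a :: L = List.range' a (L.length + 1) := by
  induction L generalizing a with
  | nil => rfl
  | cons b T ih =>
    rw [List.isChain_cons_cons] at h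
    obtain ⟨rfl, h⟩ := h
    rw [List.length_cons, List.range'_succ, ← ih h]

lemma exists_eq_range'_of_isChain_succ {n : ℕ} {L : List ℕ} (hL : IsWord n L) (hne : L ≠ [])
    (h : L.IsChain (fun a b => a + 1 = b)) :
    ∃ i k, 1 ≤ i ∧ i ≤ k ∧ k ≤ n - 1 ∧ L = List.range' i (k + 1 - i) := by
  obtain ⟨a, T, rfl⟩ := List.exists_cons_of_ne_nil hne
  have hrange := eq_range'_of_isChain_succ h
  have ha := hL a List.mem_cons_self
  have hk := hL (a + T.length) (by rw [hrange, List.mem_range'_1]; omega)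
  exact ⟨a, a + T.length, ha.1, by omega, hk.2, by rw [hrange]; congr 1; omega⟩

theorem stmt10_general (n : ℕ) (w : Equiv.Perm (Fin n)) :
    (∃! L : List ℕ, IsReducedWord n w L) ↔
      (w = 1 ∨
       (∃ i k, 1 ≤ i ∧ i ≤ k ∧ k ≤ n - 1 ∧
         w = ((List.range' i (k + 1 - i)).map (sigma n)).prod) ∨
       (∃ i k, 1 ≤ k ∧ k ≤ i ∧ i ≤ n - 1 ∧
         w = (((List.range' k (i + 1 - k)).reverse).map (sigma n)).prod)) := by
  constructor
  · rintro ⟨L, hL, huniq⟩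
    rcases eq_or_ne L [] with rfl | hne
    · exact Or.inl hL.2.1.symm
    rcases isChain_succ_or_pred_of_not_infix (hL.isChain_of_unique huniq)
      (hL.not_infix_of_unique huniq) with hinc | hdec
    · obtain ⟨i, k, hi, hik, hk, rfl⟩ := exists_eq_range'_of_isChain_succ hL.1 hne hinc
      exact Or.inr (Or.inl ⟨i, k, hi, hik, hk, hL.2.1.symm⟩)
    · obtain ⟨k, i, hk, hki, hi, hrev⟩ := exists_eq_range'_of_isChain_succ hL.reverse.1
        (List.reverse_ne_nil_iff.2 hne) (List.isChain_reverse.2 hdec)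
      refine Or.inr (Or.inr ⟨i, k, hk, hki, hi, ?_⟩)
      rw [← hrev, List.reverse_reverse, hL.2.1]
  · rintro (rfl | ⟨i, k, hi, hik, hk, rfl⟩ | ⟨i, k, hk, hki, hi, rfl⟩)
    · exact ⟨[], isReducedWord_one_iff.2 rfl, fun _ => isReducedWord_one_iff.1⟩
    · exact existsUnique_isReducedWord_ascRun hi (by omega) (by omega)
    · rw [prod_map_sigma_reverse, existsUnique_isReducedWord_inv_iff]
      exact existsUnique_isReducedWord_ascRun hk (by omega) (by omega)

theorem stmt10 (n : ℕ) (hn : 2 ≤ n) (w : Equiv.Perm (Fin n)) :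
    (∃! L : List ℕ, IsReducedWord n w L) ↔
      (w = 1 ∨
       (∃ i k, 1 ≤ i ∧ i ≤ k ∧ k ≤ n - 1 ∧
         w = ((List.range' i (k + 1 - i)).map (sigma n)).prod) ∨
       (∃ i k, 1 ≤ k ∧ k ≤ i ∧ i ≤ n - 1 ∧
         w = (((List.range' k (i + 1 - k)).reverse).map (sigma n)).prod)) :=
  stmt10_general n w
end
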